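/- arXiv:2506.18644 — 12 statements merged into one kernel-verified Lean document; each statement's English description precedes it below -/
import Mathlib

section
/- Let X be a finite nonempty set, A a finite set, H a real inner product space, η ∈ H a unit vector, and let (v_{x,a})_{x∈X,a∈A} and (w_{x,a})_{x∈X,a∈A} be families of vectors in H such that ⟨v_{x,a}, v_{x,a'}⟩ = 0 whenever a ≠ a', ⟨w_{x,b}, w_{x,b'}⟩ = 0 whenever b ≠ b', and Σ_{a∈A} v_{x,a} = η = Σ_{b∈A} w_{x,b} for every x ∈ X. If moreover ⟨v_{x,a}, w_{x,b}⟩ = 0 for every x ∈ X and all a ≠ b (the synchronicity condition), then v_{x,a} = w_{x,a} for all x ∈ X and a ∈ A. -/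
open scoped InnerProductSpace

/-!
Pairing `v x a` with `η = ∑ b, v x b = ∑ b, w x b` and using orthogonality on either side gives
`⟪v x a, v x a⟫ = ⟪v x a, η⟫ = ⟪v x a, w x a⟫`, i.e. `v x a ⟂ v x a - w x a`; symmetrically
`w x a ⟂ v x a - w x a`, so `v x a - w x a` is orthogonal to itself.
-/

section

variable {𝕜 H ι : Type*} [RCLike 𝕜] [NormedAddCommGroup H] [InnerProductSpace 𝕜 H] [Fintype ι]

theorem inner_sum_eq_inner_of_inner_eq_zero (u : H) (f : ι → H) (i : ι)
    (h : ∀ j, j ≠ i → ⟪u, f j⟫_𝕜 = 0) : ⟪u, ∑ j, f j⟫_𝕜 = ⟪u, f i⟫_𝕜 := by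
  rw [inner_sum]
  exact Fintype.sum_eq_single i h

theorem eq_of_sum_eq_of_inner_eq_zero {v w : ι → H}
    (hv : ∀ i j, i ≠ j → ⟪v i, v j⟫_𝕜 = 0) (hw : ∀ i j, i ≠ j → ⟪w i, w j⟫_𝕜 = 0)
    (hsum : ∑ i, v i = ∑ i, w i) (hvw : ∀ i j, i ≠ j → ⟪v i, w j⟫_𝕜 = 0) : v = w := by
  funext i
  have hwv : ∀ j, j ≠ i → ⟪w i, v j⟫_𝕜 = 0 := fun j hj => by
    rw [← inner_conj_symm, hvw j i hj, map_zero]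
  have hv_perp : ⟪v i, v i - w i⟫_𝕜 = 0 := by
    rw [inner_sub_right, ← inner_sum_eq_inner_of_inner_eq_zero (v i) v i (fun j hj => hv i j hj.symm),
      ← inner_sum_eq_inner_of_inner_eq_zero (v i) w i (fun j hj => hvw i j hj.symm), hsum, sub_self]
  have hw_perp : ⟪w i, v i - w i⟫_𝕜 = 0 := by
    rw [inner_sub_right, ← inner_sum_eq_inner_of_inner_eq_zero (w i) v i hwv,
      ← inner_sum_eq_inner_of_inner_eq_zero (w i) w i (fun j hj => hw i j hj.symm), hsum, sub_self]
  have hself : ⟪v i - w i, v i - w i⟫_𝕜 = 0 := by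
    rw [inner_sub_left, hv_perp, hw_perp, sub_self]
  exact sub_eq_zero.mp (inner_self_eq_zero.mp hself)
end

theorem stmt_0_general {X A H : Type*} [Fintype A]
    [NormedAddCommGroup H] [InnerProductSpace ℝ H]
    (η : H) (v w : X → A → H)
    (hv : ∀ (x : X) (a a' : A), a ≠ a' → ⟪v x a, v x a'⟫_ℝ = 0)
    (hw : ∀ (x : X) (b b' : A), b ≠ b' → ⟪w x b, w x b'⟫_ℝ = 0)
    (hvsum : ∀ x : X, ∑ a : A, v x a = η)
    (hwsum : ∀ x : X, ∑ b : A, w x b = η)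
    (hsync : ∀ (x : X) (a b : A), a ≠ b → ⟪v x a, w x b⟫_ℝ = 0) :
    ∀ (x : X) (a : A), v x a = w x a := by
  intro x
  exact congrFun <| eq_of_sum_eq_of_inner_eq_zero (hv x) (hw x) ((hvsum x).trans (hwsum x).symm)
    (hsync x)

/-- A synchronous vect-density has equal Alice and Bob vectors. -/
theorem stmt_0 {X A H : Type*} [Fintype X] [Nonempty X] [Fintype A]
    [NormedAddCommGroup H] [InnerProductSpace ℝ H]
    (η : H) (hη : ‖η‖ = 1) (v w : X → A → H)
    (hv : ∀ (x : X) (a a' : A), a ≠ a' → ⟪v x a, v x a'⟫_ℝ = 0)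
    (hw : ∀ (x : X) (b b' : A), b ≠ b' → ⟪w x b, w x b'⟫_ℝ = 0)
    (hvsum : ∀ x : X, ∑ a : A, v x a = η)
    (hwsum : ∀ x : X, ∑ b : A, w x b = η)
    (hsync : ∀ (x : X) (a b : A), a ≠ b → ⟪v x a, w x b⟫_ℝ = 0) :
    ∀ (x : X) (a : A), v x a = w x a :=
  stmt_0_general η v w hv hw hvsum hwsum hsync
end

section
/- Let X, Y be finite nonempty sets, A a finite set, and f : X × Y → Perm(A) a unique game. Suppose there is a perfect vect-density for this game: a real inner product space H, a unit vector η ∈ H, and families (v_{x,a})_{x∈X,a∈A}, (w_{y,b})_{y∈Y,b∈A} in H with ⟨v_{x,a}, v_{x,a'}⟩ = 0 for a ≠ a', ⟨w_{y,b}, w_{y,b'}⟩ = 0 for b ≠ b', Σ_{a∈A} v_{x,a} = η = Σ_{b∈A} w_{y,b} for all x, y, all inner products ⟨v_{x,a}, w_{y,b}⟩ ≥ 0, and ⟨v_{x,a}, w_{y,b}⟩ = 0 whenever a ≠ f(x,y)(b). Then there exist functions h_A : X → A and h_B : Y → A such that h_A(x) = f(x,y)(h_B(y)) for all x ∈ X,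 y ∈ Y (a perfect deterministic strategy). -/
/-!
Perfection makes `⟪v x a, w y b⟫` with `b = (f (x, y))⁻¹ a` the only nonzero term when `v x a` or
`w y b` is paired with `η`, so it equals both `‖v x a‖²` and `‖w y b‖²`, forcing `v x a = w y b`.
Thus all the orthogonal families `v x` and `w y` consist of the same vectors, relabelled by the game.
Since `η ≠ 0` one of these vectors, `u`, is nonzero, and by orthogonality it carries a unique label
in each family; answering with that label is a perfect deterministic strategy.
-/

open scoped InnerProductSpace

section Orthogonal

variable {ι E : Type*} [NormedAddCommGroup E] [InnerProductSpace ℝ E]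

theorem real_inner_sum_eq_of_forall_ne [Fintype ι] {p : E} {u : ι → E} {i : ι}
    (h : ∀ j, j ≠ i → ⟪p, u j⟫_ℝ = 0) : ⟪p, ∑ j, u j⟫_ℝ = ⟪p, u i⟫_ℝ := by
  rw [inner_sum]
  exact Finset.sum_eq_single i (fun j _ => h j) (by simp)

theorem eq_of_real_inner_eq_inner_self {p q : E} (hp : ⟪p, q⟫_ℝ = ⟪p, p⟫_ℝ)
    (hq : ⟪p, q⟫_ℝ = ⟪q, q⟫_ℝ) : p = q := by
  rw [← sub_eq_zero, ← inner_self_eq_zero (𝕜 := ℝ), inner_sub_sub_self, real_inner_comm p q]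
  linarith

theorem eq_of_pairwise_inner_eq_zero {u : ι → E} (hu : ∀ i j, i ≠ j → ⟪u i, u j⟫_ℝ = 0)
    {i j : ι} (hij : u i = u j) (hi : u i ≠ 0) : i = j := by
  by_contra hne
  exact hi (inner_self_eq_zero.mp (hij ▸ hu i j hne : ⟪u i, u i⟫_ℝ = 0))

end Orthogonal

theorem perfect_density_vectors_eq {X Y A H : Type*} [Fintype A] [NormedAddCommGroup H]
    [InnerProductSpace ℝ H] (f : X × Y → Equiv.Perm A) (η : H) (v : X → A → H) (w : Y → A → H)
    (hv : ∀ (x : X) (a a' : A), a ≠ a' → ⟪v x a, v x a'⟫_ℝ = 0)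
    (hw : ∀ (y : Y) (b b' : A), b ≠ b' → ⟪w y b, w y b'⟫_ℝ = 0)
    (hvsum : ∀ x : X, ∑ a : A, v x a = η)
    (hwsum : ∀ y : Y, ∑ b : A, w y b = η)
    (hperf : ∀ (x : X) (y : Y) (a b : A), a ≠ f (x, y) b → ⟪v x a, w y b⟫_ℝ = 0)
    (x : X) (y : Y) (a : A) : v x a = w y ((f (x, y)).symm a) := by
  set b := (f (x, y)).symm a
  have hfb : f (x, y) b = a := Equiv.apply_symm_apply _ _
  have hvv : ⟪v x a, η⟫_ℝ = ⟪v x a, v x a⟫_ℝ :=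
    hvsum x ▸ real_inner_sum_eq_of_forall_ne fun a' ha' => hv x a a' ha'.symm
  have hvw : ⟪v x a, η⟫_ℝ = ⟪v x a, w y b⟫_ℝ :=
    hwsum y ▸ real_inner_sum_eq_of_forall_ne fun b' hb' =>
      hperf x y a b' fun h => hb' ((f (x, y)).injective (hfb.trans h).symm)
  have hww : ⟪w y b, η⟫_ℝ = ⟪w y b, w y b⟫_ℝ :=
    hwsum y ▸ real_inner_sum_eq_of_forall_ne fun b' hb' => hw y b b' hb'.symm
  have hwv : ⟪w y b, η⟫_ℝ = ⟪w y b, v x a⟫_ℝ :=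
    hvsum x ▸ real_inner_sum_eq_of_forall_ne fun a' ha' => by
      rw [real_inner_comm]
      exact hperf x y a' b (hfb ▸ ha')
  exact eq_of_real_inner_eq_inner_self (by linarith)
    (by linarith [real_inner_comm (w y b) (v x a)])

theorem stmt_1_general {X Y A H : Type*} [Nonempty X] [Nonempty Y]
    [Fintype A] [NormedAddCommGroup H] [InnerProductSpace ℝ H]
    (f : X × Y → Equiv.Perm A)
    (η : H) (hη : ‖η‖ = 1) (v : X → A → H) (w : Y → A → H)
    (hv : ∀ (x : X) (a a' : A), a ≠ a' → ⟪v x a, v x a'⟫_ℝ = 0)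
    (hw : ∀ (y : Y) (b b' : A), b ≠ b' → ⟪w y b, w y b'⟫_ℝ = 0)
    (hvsum : ∀ x : X, ∑ a : A, v x a = η)
    (hwsum : ∀ y : Y, ∑ b : A, w y b = η)
    (hperf : ∀ (x : X) (y : Y) (a b : A), a ≠ f (x, y) b → ⟪v x a, w y b⟫_ℝ = 0) :
    ∃ (hA : X → A) (hB : Y → A), ∀ (x : X) (y : Y), hA x = f (x, y) (hB y) := by
  have key := perfect_density_vectors_eq f η v w hv hw hvsum hwsum hperf
  obtain ⟨x₀⟩ := ‹Nonempty X›
  obtain ⟨y₀⟩ := ‹Nonempty Y›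
  have hη₀ : ∑ b, w y₀ b ≠ 0 := by
    rw [hwsum y₀, ← norm_ne_zero_iff, hη]
    exact one_ne_zero
  obtain ⟨b₀, -, hb₀⟩ := Finset.exists_ne_zero_of_sum_ne_zero hη₀
  refine ⟨fun x => f (x, y₀) b₀, fun y => (f (x₀, y)).symm (f (x₀, y₀) b₀), fun x y => ?_⟩
  have hA : v x (f (x, y₀) b₀) = w y₀ b₀ := by rw [key x y₀, Equiv.symm_apply_apply]
  refine eq_of_pairwise_inner_eq_zero (hv x) ?_ (hA ▸ hb₀)
  rw [hA, key x y, Equiv.symm_apply_apply, ← key x₀ y, key x₀ y₀, Equiv.symm_apply_apply]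

/-- A unique game with a perfect vect-density has a perfect deterministic strategy. -/
theorem stmt_1 {X Y A H : Type*} [Fintype X] [Nonempty X] [Fintype Y] [Nonempty Y]
    [Fintype A] [NormedAddCommGroup H] [InnerProductSpace ℝ H]
    (f : X × Y → Equiv.Perm A)
    (η : H) (hη : ‖η‖ = 1) (v : X → A → H) (w : Y → A → H)
    (hv : ∀ (x : X) (a a' : A), a ≠ a' → ⟪v x a, v x a'⟫_ℝ = 0)
    (hw : ∀ (y : Y) (b b' : A), b ≠ b' → ⟪w y b, w y b'⟫_ℝ = 0)
    (hvsum : ∀ x : X, ∑ a : A, v x a = η)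
    (hwsum : ∀ y : Y, ∑ b : A, w y b = η)
    (hpos : ∀ (x : X) (y : Y) (a b : A), 0 ≤ ⟪v x a, w y b⟫_ℝ)
    (hperf : ∀ (x : X) (y : Y) (a b : A), a ≠ f (x, y) b → ⟪v x a, w y b⟫_ℝ = 0) :
    ∃ (hA : X → A) (hB : Y → A), ∀ (x : X) (y : Y), hA x = f (x, y) (hB y) :=
  stmt_1_general f η hη v w hv hw hvsum hwsum hperf
end

section
/- Let X be a finite nonempty set, A a finite set, and f : X × X → Perm(A) a unique game with X = Y. Suppose there is a perfect synchronous vect-density for this game: a real inner product space H, a unit vector η ∈ H, and families (v_{x,a}), (w_{y,b}) (x,y ∈ X, a,b ∈ A) in H satisfying the vect-density conditions, with p(a,b|x,y) := ⟨v_{x,a}, w_{y,b}⟩ = 0 whenever a ≠ f(x,y)(b), and p(a,b|x,x) = 0 for all x and a ≠ b. Then there exists a single function h : X → A such that h(x) = f(x,y)(h(y)) for all x, y ∈ X (a perfect synchronous deterministic strategy). -/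
/-!
The families `(v x a)_a` and `(w y b)_b` are orthogonal decompositions of the same vector `η`.
For `a = f(x,y) b`, pairing `v x a` with `η` computes `‖v x a‖²` through the first decomposition
and `⟪v x a, w y b⟫` through the second, as perfection kills every other term; symmetrically
`‖w y b‖² = ⟪v x a, w y b⟫`, so `v x (f(x,y) b) = w y b`. Synchronicity is the case
`f(x,x) = id` and gives `v y = w y`, hence `v x (f(x,y) b) = v y b`. Choosing `v x₀ a₀ ≠ 0`,
the map `h x := f(x,x₀) a₀` works: `v x (h x)` and `v x (f(x,y) (h y))` both equal `v x₀ a₀ ≠ 0`,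
while distinct vectors of the family `v x` are orthogonal.
-/

open scoped InnerProductSpace

section OrthogonalDecomposition

variable {H : Type*} [NormedAddCommGroup H] [InnerProductSpace ℝ H]

theorem eq_of_real_inner_self_eq_inner {a b : H} (ha : ⟪a, a⟫_ℝ = ⟪a, b⟫_ℝ)
    (hb : ⟪b, b⟫_ℝ = ⟪a, b⟫_ℝ) : a = b := by
  rw [← sub_eq_zero, ← inner_self_eq_zero (𝕜 := ℝ), inner_sub_sub_self]
  linarith [real_inner_comm a b]

theorem apply_eq_of_sum_eq_of_inner_eq_zero {A B : Type*} [Fintype A] [Fintype B]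
    {v : A → H} {w : B → H} (hv : Pairwise fun a a' => ⟪v a, v a'⟫_ℝ = 0)
    (hw : Pairwise fun b b' => ⟪w b, w b'⟫_ℝ = 0) (hsum : ∑ a, v a = ∑ b, w b)
    {σ : B → A} (hσ : σ.Injective) (hvw : ∀ a b, a ≠ σ b → ⟪v a, w b⟫_ℝ = 0) (b : B) :
    v (σ b) = w b := by
  apply eq_of_real_inner_self_eq_inner
  · calc ⟪v (σ b), v (σ b)⟫_ℝ = ⟪v (σ b), ∑ a, v a⟫_ℝ := by
          rw [inner_sum, Fintype.sum_eq_single (σ b) fun a ha => hv ha.symm]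
      _ = ⟪v (σ b), ∑ b', w b'⟫_ℝ := by rw [hsum]
      _ = ⟪v (σ b), w b⟫_ℝ := by
          rw [inner_sum, Fintype.sum_eq_single b fun b' hb' => hvw _ _ (hσ.ne hb'.symm)]
  · calc ⟪w b, w b⟫_ℝ = ⟪∑ b', w b', w b⟫_ℝ := by
          rw [sum_inner, Fintype.sum_eq_single b fun b' hb' => hw hb']
      _ = ⟪∑ a, v a, w b⟫_ℝ := by rw [hsum]
      _ = ⟪v (σ b), w b⟫_ℝ := by
          rw [sum_inner, Fintype.sum_eq_single (σ b) fun a ha => hvw a b ha]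

theorem eq_of_apply_eq_of_pairwise_inner_eq_zero {A : Type*} {v : A → H}
    (hv : Pairwise fun a a' => ⟪v a, v a'⟫_ℝ = 0) {a a' : A} (heq : v a = v a')
    (hne : v a ≠ 0) : a = a' := by
  by_contra h
  have h_orth : ⟪v a, v a'⟫_ℝ = 0 := hv h
  rw [← heq, inner_self_eq_zero] at h_orth
  exact hne h_orth

end OrthogonalDecomposition

theorem stmt_2_general {X A H : Type*} [Fintype X] [Nonempty X] [Fintype A]
    [NormedAddCommGroup H] [InnerProductSpace ℝ H]
    (f : X × X → Equiv.Perm A)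
    (η : H) (hη : ‖η‖ = 1) (v : X → A → H) (w : X → A → H)
    (hv : ∀ (x : X) (a a' : A), a ≠ a' → ⟪v x a, v x a'⟫_ℝ = 0)
    (hw : ∀ (y : X) (b b' : A), b ≠ b' → ⟪w y b, w y b'⟫_ℝ = 0)
    (hvsum : ∀ x : X, ∑ a : A, v x a = η)
    (hwsum : ∀ y : X, ∑ b : A, w y b = η)
    (hperf : ∀ (x y : X) (a b : A), a ≠ f (x, y) b → ⟪v x a, w y b⟫_ℝ = 0)
    (hsync : ∀ (x : X) (a b : A), a ≠ b → ⟪v x a, w x b⟫_ℝ = 0) :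
    ∃ h : X → A, ∀ x y : X, h x = f (x, y) (h y) := by
  have hsum : ∀ x y, ∑ a, v x a = ∑ b, w y b := fun x y => (hvsum x).trans (hwsum y).symm
  have hdiag : ∀ y b, v y b = w y b := fun y =>
    apply_eq_of_sum_eq_of_inner_eq_zero (hv y) (hw y) (hsum y y) Function.injective_id (hsync y)
  have hshift : ∀ x y b, v x (f (x, y) b) = v y b := fun x y b =>
    (apply_eq_of_sum_eq_of_inner_eq_zero (hv x) (hw y) (hsum x y) (f (x, y)).injective
      (hperf x y) b).trans (hdiag y b).symm
  obtain ⟨x₀⟩ := ‹Nonempty X›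
  have hη₀ : ∑ a, v x₀ a ≠ 0 := by
    rw [hvsum x₀, ← norm_ne_zero_iff, hη]
    exact one_ne_zero
  obtain ⟨a₀, -, ha₀⟩ := Finset.exists_ne_zero_of_sum_ne_zero hη₀
  refine ⟨fun x => f (x, x₀) a₀, fun x y => ?_⟩
  refine eq_of_apply_eq_of_pairwise_inner_eq_zero (hv x) ?_ (by rwa [hshift])
  rw [hshift, hshift, hshift]

/-- A unique game (with equal input sets) with a perfect synchronous vect-density has a
perfect synchronous deterministic strategy. -/
theorem stmt_2 {X A H : Type*} [Fintype X] [Nonempty X] [Fintype A]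
    [NormedAddCommGroup H] [InnerProductSpace ℝ H]
    (f : X × X → Equiv.Perm A)
    (η : H) (hη : ‖η‖ = 1) (v : X → A → H) (w : X → A → H)
    (hv : ∀ (x : X) (a a' : A), a ≠ a' → ⟪v x a, v x a'⟫_ℝ = 0)
    (hw : ∀ (y : X) (b b' : A), b ≠ b' → ⟪w y b, w y b'⟫_ℝ = 0)
    (hvsum : ∀ x : X, ∑ a : A, v x a = η)
    (hwsum : ∀ y : X, ∑ b : A, w y b = η)
    (hpos : ∀ (x y : X) (a b : A), 0 ≤ ⟪v x a, w y b⟫_ℝ)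
    (hperf : ∀ (x y : X) (a b : A), a ≠ f (x, y) b → ⟪v x a, w y b⟫_ℝ = 0)
    (hsync : ∀ (x : X) (a b : A), a ≠ b → ⟪v x a, w x b⟫_ℝ = 0) :
    ∃ h : X → A, ∀ x y : X, h x = f (x, y) (h y) :=
  stmt_2_general f η hη v w hv hw hvsum hwsum hperf hsync
end

section
/- Let Ω be a finite group, X and Y finite nonempty sets, and f : X × Y → Ω a group based game. Let π : X × Y → ℝ be a probability density with π₀ := min_{x,y} π(x,y) > 0, and let ε > 0 satisfy ε + 2|Ω|ε/π₀ + 2√(|Ω|ε/π₀) < 1. Suppose there is a vect-density p(a,b|x,y) = ⟨v_{x,a}, w_{y,b}⟩ with input sets X, Y and output set Ω whose expected winning value satisfies Σ_{x∈X, y∈Y} π(x,y) Σ_{b∈Ω} p(f(x,y)·b, b | x, y) ≥ 1 − ε. Then there exist functions h_A : X → Ω and h_B : Y → Ω such that h_A(x)·h_B(y)⁻¹ = f(x,y) for all x ∈ X, y ∈ Y; in particular, the game has a perfect deterministic strategy. -/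
open scoped InnerProductSpace

open Finset

/-!
Write `S (x, y) = ∑ b, p (f (x, y) * b, b | x, y)`. Since every weight is at least `π₀`, a total
loss of `ε` forces `S (x, y) ≥ 1 - ε / π₀` for every input pair. Regard `v x` and `w y` as unit
vectors of `⨁_Ω H`, on which `Ω` acts isometrically by translating the answers; then `S (x, y)`
is the inner product of `w y` with `v x` translated by `f (x, y)`. Two inputs `x, x'` that are both
close to `w y` make `v x` close to `v x'` translated by `f (x', y) * f (x, y)⁻¹`. Distinct
translates of `v x'` are orthogonal, so no unit vector is close to two of them: the ratio
`f (x', y) * f (x, y)⁻¹` does not depend on `y`, which is what a perfect strategy needs.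
-/

theorem one_sub_div_le_of_one_sub_le_sum_mul {ι : Type*} [Fintype ι] {π S : ι → ℝ} {π₀ ε : ℝ}
    (hπ₀ : 0 < π₀) (hπ : ∀ i, π₀ ≤ π i) (hsum : ∑ i, π i = 1) (hS : ∀ i, S i ≤ 1)
    (hval : 1 - ε ≤ ∑ i, π i * S i) (i : ι) : 1 - ε / π₀ ≤ S i := by
  have hloss : ∀ j, 0 ≤ π j * (1 - S j) := fun j =>
    mul_nonneg (hπ₀.le.trans (hπ j)) (sub_nonneg.2 (hS j))
  have htotal : ∑ j, π j * (1 - S j) ≤ ε := by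
    simp only [mul_sub, mul_one, sum_sub_distrib, hsum]
    linarith
  have hi : (1 - S i) * π₀ ≤ ε := calc
    (1 - S i) * π₀ ≤ π i * (1 - S i) := by
      rw [mul_comm]; exact mul_le_mul_of_nonneg_right (hπ i) (sub_nonneg.2 (hS i))
    _ ≤ ∑ j, π j * (1 - S j) := single_le_sum (fun j _ => hloss j) (mem_univ i)
    _ ≤ ε := htotal
  linarith [(le_div_iff₀ hπ₀).2 hi]

theorem sqrt_two_lt_two_sub_eight_mul {c L : ℝ} (hc : 2 ≤ c) (hL : 0 ≤ L)
    (h : 2 * c * L + 2 * √(c * L) < 1) : √2 < 2 - 8 * L := by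
  set s := √(2 * L)
  have hs : s ≤ √(c * L) := Real.sqrt_le_sqrt (by nlinarith)
  have hs2 : s ^ 2 = 2 * L := Real.sq_sqrt (by linarith)
  have hsmall : 2 * s ^ 2 + 2 * s < 1 := by nlinarith
  have hsqrt2 : √2 ^ 2 = 2 := Real.sq_sqrt (by norm_num)
  nlinarith [Real.sqrt_nonneg 2, Real.sqrt_nonneg (2 * L), sq_nonneg (√2 - 3 / 2)]

section InnerProductSpace

variable {E : Type*} [NormedAddCommGroup E] [InnerProductSpace ℝ E]

theorem real_inner_sum_sum_of_pairwise {ι : Type*} [Fintype ι] {u : ι → E}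
    (h : Pairwise fun i j => ⟪u i, u j⟫_ℝ = 0) :
    ⟪∑ i, u i, ∑ i, u i⟫_ℝ = ∑ i, ⟪u i, u i⟫_ℝ := by
  simp only [sum_inner, inner_sum]
  exact sum_congr rfl fun i _ => Fintype.sum_eq_single i fun j hj => h hj

theorem norm_sub_sq_of_norm_eq_one {u m : E} (hu : ‖u‖ = 1) (hm : ‖m‖ = 1) :
    ‖u - m‖ ^ 2 = 2 - 2 * ⟪u, m⟫_ℝ := by
  rw [norm_sub_sq_real, hu, hm]; ring

theorem one_sub_four_mul_le_real_inner {u u' m : E} {L : ℝ} (hu : ‖u‖ = 1) (hu' : ‖u'‖ = 1)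
    (hm : ‖m‖ = 1) (h : 1 - L ≤ ⟪u, m⟫_ℝ) (h' : 1 - L ≤ ⟪u', m⟫_ℝ) :
    1 - 4 * L ≤ ⟪u, u'⟫_ℝ := by
  have hum : ‖u - m‖ ^ 2 ≤ 2 * L := by rw [norm_sub_sq_of_norm_eq_one hu hm]; linarith
  have hu'm : ‖m - u'‖ ^ 2 ≤ 2 * L := by
    rw [norm_sub_rev, norm_sub_sq_of_norm_eq_one hu' hm]; linarith
  have htri : ‖u - u'‖ ≤ ‖u - m‖ + ‖m - u'‖ := norm_sub_le_norm_sub_add_norm_sub _ _ _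
  have huu' : ‖u - u'‖ ^ 2 ≤ 8 * L := by
    nlinarith [norm_nonneg (u - u'), sq_nonneg (‖u - m‖ - ‖m - u'‖)]
  rw [norm_sub_sq_of_norm_eq_one hu hu'] at huu'
  linarith

theorem real_inner_add_real_inner_le_sqrt_two {u a b : E} (hu : ‖u‖ = 1) (ha : ‖a‖ = 1)
    (hb : ‖b‖ = 1) (hab : ⟪a, b⟫_ℝ = 0) : ⟪u, a⟫_ℝ + ⟪u, b⟫_ℝ ≤ √2 := by
  have hnorm : ‖a + b‖ = √2 := by
    rw [← Real.sqrt_sq (norm_nonneg _), norm_add_sq_real, ha, hb, hab]; norm_num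
  calc ⟪u, a⟫_ℝ + ⟪u, b⟫_ℝ = ⟪u, a + b⟫_ℝ := (inner_add_right _ _ _).symm
    _ ≤ ‖u‖ * ‖a + b‖ := real_inner_le_norm _ _
    _ = √2 := by rw [hu, hnorm, one_mul]

end InnerProductSpace

section LeftShift

variable {Ω H : Type*} [Group Ω] [Fintype Ω] [NormedAddCommGroup H] [InnerProductSpace ℝ H]

/-- The winning probability `∑ b, p (g * b, b | x, y)` is
`⟪leftShift (v x) g, leftShift (w y) 1⟫`. -/
def leftShift (u : Ω → H) (g : Ω) : PiLp 2 (fun _ : Ω => H) :=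
  WithLp.toLp 2 fun b => u (g * b)

theorem inner_leftShift (u u' : Ω → H) (g g' : Ω) :
    ⟪leftShift u g, leftShift u' g'⟫_ℝ = ∑ a, ⟪u a, u' (g' * g⁻¹ * a)⟫_ℝ := by
  rw [leftShift, leftShift, PiLp.inner_apply,
    ← Equiv.sum_comp (Equiv.mulLeft g) fun a => ⟪u a, u' (g' * g⁻¹ * a)⟫_ℝ]
  simp [mul_assoc]

theorem inner_leftShift_eq_inner_leftShift_one (u u' : Ω → H) (g g' : Ω) :
    ⟪leftShift u g, leftShift u' g'⟫_ℝ = ⟪leftShift u 1, leftShift u' (g' * g⁻¹)⟫_ℝ := by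
  simp [inner_leftShift]

variable {u : Ω → H} {η : H}

theorem norm_leftShift (hη : ‖η‖ = 1) (horth : Pairwise fun a a' => ⟪u a, u a'⟫_ℝ = 0)
    (hsum : ∑ a, u a = η) (g : Ω) : ‖leftShift u g‖ = 1 := by
  have hsq : ‖leftShift u g‖ ^ 2 = 1 := by
    rw [← real_inner_self_eq_norm_sq, inner_leftShift]
    simp only [mul_inv_cancel, one_mul]
    rw [← real_inner_sum_sum_of_pairwise horth, hsum, real_inner_self_eq_norm_sq, hη, one_pow]
  exact (pow_eq_one_iff_of_nonneg (norm_nonneg _) two_ne_zero).1 hsq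

theorem inner_leftShift_eq_zero (horth : Pairwise fun a a' => ⟪u a, u a'⟫_ℝ = 0) {g g' : Ω}
    (hne : g ≠ g') : ⟪leftShift u g, leftShift u g'⟫_ℝ = 0 := by
  rw [inner_leftShift]
  refine sum_eq_zero fun a _ => horth ?_
  rwa [Ne, right_eq_mul, mul_inv_eq_one, eq_comm]

theorem eq_of_le_inner_leftShift (hη : ‖η‖ = 1) (horth : Pairwise fun a a' => ⟪u a, u a'⟫_ℝ = 0)
    (hsum : ∑ a, u a = η) {V : PiLp 2 (fun _ : Ω => H)} (hV : ‖V‖ = 1) {L : ℝ}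
    (hL : √2 < 2 - 8 * L) {g g' : Ω} (hg : 1 - 4 * L ≤ ⟪V, leftShift u g⟫_ℝ)
    (hg' : 1 - 4 * L ≤ ⟪V, leftShift u g'⟫_ℝ) : g = g' := by
  by_contra hne
  have := real_inner_add_real_inner_le_sqrt_two hV (norm_leftShift hη horth hsum g)
    (norm_leftShift hη horth hsum g') (inner_leftShift_eq_zero horth hne)
  linarith

end LeftShift

theorem exists_mul_inv_eq_of_mul_inv_eq {Ω X Y : Type*} [Group Ω] [Nonempty X] [Nonempty Y]
    (f : X × Y → Ω) (h : ∀ x x' y y', f (x', y) * (f (x, y))⁻¹ = f (x', y') * (f (x, y'))⁻¹) :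
    ∃ (hA : X → Ω) (hB : Y → Ω), ∀ x y, hA x * (hB y)⁻¹ = f (x, y) := by
  obtain ⟨x₀⟩ := ‹Nonempty X›
  obtain ⟨y₀⟩ := ‹Nonempty Y›
  refine ⟨fun x => f (x, y₀) * (f (x₀, y₀))⁻¹, fun y => (f (x₀, y))⁻¹, fun x y => ?_⟩
  simp only [inv_inv]
  rw [h x₀ x y₀ y, inv_mul_cancel_right]

theorem stmt_4_general {Ω X Y H : Type*} [Group Ω] [Fintype Ω]
    [Fintype X] [Nonempty X] [Fintype Y] [Nonempty Y]
    [NormedAddCommGroup H] [InnerProductSpace ℝ H]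
    (f : X × Y → Ω)
    (π : X × Y → ℝ)
    (hπsum : ∑ x : X, ∑ y : Y, π (x, y) = 1)
    (π₀ : ℝ) (hπ₀def : π₀ = ⨅ xy : X × Y, π xy) (hπ₀pos : 0 < π₀)
    (ε : ℝ) (hε : 0 < ε)
    (hεsmall : ε + 2 * (Fintype.card Ω : ℝ) * ε / π₀ +
      2 * Real.sqrt ((Fintype.card Ω : ℝ) * ε / π₀) < 1)
    (η : H) (hη : ‖η‖ = 1) (v : X → Ω → H) (w : Y → Ω → H)
    (hv : ∀ (x : X) (a a' : Ω), a ≠ a' → ⟪v x a, v x a'⟫_ℝ = 0)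
    (hw : ∀ (y : Y) (b b' : Ω), b ≠ b' → ⟪w y b, w y b'⟫_ℝ = 0)
    (hvsum : ∀ x : X, ∑ a : Ω, v x a = η)
    (hwsum : ∀ y : Y, ∑ b : Ω, w y b = η)
    (hval : 1 - ε ≤ ∑ x : X, ∑ y : Y, π (x, y) * ∑ b : Ω, ⟪v x (f (x, y) * b), w y b⟫_ℝ) :
    ∃ (hA : X → Ω) (hB : Y → Ω), ∀ (x : X) (y : Y), hA x * (hB y)⁻¹ = f (x, y) := by
  rcases subsingleton_or_nontrivial Ω with _ | _
  · exact ⟨1, 1, fun _ _ => Subsingleton.elim _ _⟩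
  have hvunit x g := norm_leftShift hη (fun a a' => hv x a a') (hvsum x) g
  have hwunit y g := norm_leftShift hη (fun b b' => hw y b b') (hwsum y) g
  have hwin : ∀ x y, 1 - ε / π₀ ≤ ⟪leftShift (v x) (f (x, y)), leftShift (w y) 1⟫_ℝ :=
    fun x y => one_sub_div_le_of_one_sub_le_sum_mul
      (S := fun xy => ⟪leftShift (v xy.1) (f xy), leftShift (w xy.2) 1⟫_ℝ) hπ₀pos
      (fun xy => hπ₀def ▸ ciInf_le (Finite.bddBelow_range π) xy)
      ((Fintype.sum_prod_type' fun x y => π (x, y)).trans hπsum)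
      (fun xy => (real_inner_le_norm _ _).trans (by rw [hvunit, hwunit, one_mul]))
      (by
        rw [← Fintype.sum_prod_type'] at hval
        simpa [leftShift, PiLp.inner_apply] using hval) (x, y)
  have hL : √2 < 2 - 8 * (ε / π₀) := by
    refine sqrt_two_lt_two_sub_eight_mul (c := Fintype.card Ω)
      (by exact_mod_cast Fintype.one_lt_card) (by positivity) ?_
    simp only [mul_div_assoc] at hεsmall
    linarith
  refine exists_mul_inv_eq_of_mul_inv_eq f fun x x' y y' =>
    eq_of_le_inner_leftShift hη (fun a a' => hv x' a a') (hvsum x') (hvunit x 1) hL ?_ ?_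
  all_goals
    rw [← inner_leftShift_eq_inner_leftShift_one]
    exact one_sub_four_mul_le_real_inner (hvunit _ _) (hvunit _ _) (hwunit _ _)
      (hwin _ _) (hwin _ _)

/-- If a group based game has a vect-density with expected winning value at least `1 - ε`
(for suitably small `ε`), then it has a perfect deterministic strategy. -/
theorem stmt_4 {Ω X Y H : Type*} [Group Ω] [Fintype Ω]
    [Fintype X] [Nonempty X] [Fintype Y] [Nonempty Y]
    [NormedAddCommGroup H] [InnerProductSpace ℝ H]
    (f : X × Y → Ω)
    (π : X × Y → ℝ) (hπ : ∀ x y, 0 ≤ π (x, y))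
    (hπsum : ∑ x : X, ∑ y : Y, π (x, y) = 1)
    (π₀ : ℝ) (hπ₀def : π₀ = ⨅ xy : X × Y, π xy) (hπ₀pos : 0 < π₀)
    (ε : ℝ) (hε : 0 < ε)
    (hεsmall : ε + 2 * (Fintype.card Ω : ℝ) * ε / π₀ +
      2 * Real.sqrt ((Fintype.card Ω : ℝ) * ε / π₀) < 1)
    (η : H) (hη : ‖η‖ = 1) (v : X → Ω → H) (w : Y → Ω → H)
    (hv : ∀ (x : X) (a a' : Ω), a ≠ a' → ⟪v x a, v x a'⟫_ℝ = 0)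
    (hw : ∀ (y : Y) (b b' : Ω), b ≠ b' → ⟪w y b, w y b'⟫_ℝ = 0)
    (hvsum : ∀ x : X, ∑ a : Ω, v x a = η)
    (hwsum : ∀ y : Y, ∑ b : Ω, w y b = η)
    (hpos : ∀ (x : X) (y : Y) (a b : Ω), 0 ≤ ⟪v x a, w y b⟫_ℝ)
    (hval : 1 - ε ≤ ∑ x : X, ∑ y : Y, π (x, y) * ∑ b : Ω, ⟪v x (f (x, y) * b), w y b⟫_ℝ) :
    ∃ (hA : X → Ω) (hB : Y → Ω), ∀ (x : X) (y : Y), hA x * (hB y)⁻¹ = f (x, y) :=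
  stmt_4_general f π hπsum π₀ hπ₀def hπ₀pos ε hε hεsmall η hη v w hv hw hvsum hwsum hval
end

section
/- Let Ω be a finite group, d ≥ 1, and ρ : Ω → M_d(ℂ) an injective group homomorphism such that ρ(g) is a unitary matrix for every g ∈ Ω. Let n ≥ 1 and let f : Fin n × Fin n → Ω satisfy f(x,x) = 1 for all x. Then the nd × nd block matrix whose (x,y) block is ρ(f(x,y)) is positive semidefinite if and only if there exists a function h : Fin n → Ω such that f(x,y) = h(x)·h(y)⁻¹ for all x, y. (Equivalently: a synchronous group based game has a perfect vect-strategy, i.e. a perfect deterministic strategy, if and only if f is a positive definite function.) -/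
/-!
A positive semidefinite block matrix is a Gram matrix: its `(x, y)` block is `V xᴴ * V y` for
some matrices `V x`. If every block is a unitary `ρ (f (x, y))` and the diagonal blocks are `1`,
each `V x` is an isometry, and comparing with a fixed `V z` forces `V x = V z * ρ (f (z, x))`.
Hence `ρ (f (x, y)) = ρ (f (z, x))ᴴ * ρ (f (z, y)) = ρ ((f (z, x))⁻¹ * f (z, y))`, and faithfulness
of `ρ` gives the deterministic strategy `h x = (f (z, x))⁻¹`. Conversely such an `h` exhibits the
block matrix as the Gram matrix of the `ρ (h x)⁻¹`.
-/

open scoped ComplexOrder MatrixOrder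

theorem MonoidHom.star_apply_of_mem_unitary {G A : Type*} [Group G] [Monoid A] [StarMul A]
    (ρ : G →* A) {g : G} (hg : ρ g ∈ unitary A) : star (ρ g) = ρ g⁻¹ :=
  left_inv_eq_right_inv (Unitary.star_mul_self_of_mem hg)
    (by rw [← map_mul, mul_inv_cancel, map_one])

namespace Matrix

variable {𝕜 ι κ m : Type*} [RCLike 𝕜] [Fintype κ] [Fintype m]

theorem PosSemidef.exists_comp_eq_gram [Fintype ι] {B : Matrix ι ι (Matrix κ κ 𝕜)}
    (hB : (comp ι ι κ κ 𝕜 B).PosSemidef) :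
    ∃ V : ι → Matrix (ι × κ) κ 𝕜, ∀ x y, B x y = (V x)ᴴ * V y := by
  classical
  obtain ⟨A, hA⟩ := CStarAlgebra.nonneg_iff_eq_star_mul_self.mp hB.nonneg
  refine ⟨fun x => of fun k j => A k (x, j), fun x y => ?_⟩
  ext i j
  simpa [mul_apply] using congrFun (congrFun hA (x, i)) (y, j)

theorem posSemidef_comp_of_eq_gram [Fintype ι] {B : Matrix ι ι (Matrix κ κ 𝕜)}
    (V : ι → Matrix m κ 𝕜) (hV : ∀ x y, B x y = (V x)ᴴ * V y) :
    (comp ι ι κ κ 𝕜 B).PosSemidef := by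
  let W : Matrix m (ι × κ) 𝕜 := of fun k q => V q.1 k q.2
  have hW : comp ι ι κ κ 𝕜 B = Wᴴ * W := by
    ext p q
    simp [W, hV, mul_apply]
  exact hW ▸ posSemidef_conjTranspose_mul_self W

theorem eq_mul_of_conjTranspose_mul_eq [DecidableEq κ] {A B : Matrix m κ 𝕜} {U : Matrix κ κ 𝕜}
    (hA : Aᴴ * A = 1) (hB : Bᴴ * B = 1) (hU : U ∈ unitaryGroup κ 𝕜) (hAB : Aᴴ * B = U) :
    B = A * U := by
  have hBA : Bᴴ * A = Uᴴ := by rw [← hAB, conjTranspose_mul, conjTranspose_conjTranspose]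
  have hUU : Uᴴ * U = 1 := mem_unitaryGroup_iff'.mp hU
  rw [← sub_eq_zero, ← conjTranspose_mul_self_eq_zero]
  calc (B - A * U)ᴴ * (B - A * U)
      = Bᴴ * B - Bᴴ * A * U - Uᴴ * (Aᴴ * B) + Uᴴ * (Aᴴ * A) * U := by
        simp only [conjTranspose_sub, conjTranspose_mul, Matrix.sub_mul, Matrix.mul_sub,
          Matrix.mul_assoc]
        abel
    _ = 0 := by rw [hA, hB, hBA, hAB, Matrix.mul_one, hUU]; abel

theorem exists_eq_mul_inv_of_map_eq_gram [DecidableEq κ] {G : Type*} [Group G]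
    (ρ : G →* Matrix κ κ 𝕜) (hρinj : Function.Injective ρ) (hρ : ∀ g, ρ g ∈ unitaryGroup κ 𝕜)
    {f : ι × ι → G} (hf : ∀ x, f (x, x) = 1) (V : ι → Matrix m κ 𝕜)
    (hV : ∀ x y, ρ (f (x, y)) = (V x)ᴴ * V y) :
    ∃ h : ι → G, ∀ x y, f (x, y) = h x * (h y)⁻¹ := by
  cases isEmpty_or_nonempty ι with
  | inl => exact ⟨isEmptyElim, isEmptyElim⟩
  | inr hι =>
    obtain ⟨z⟩ := hι
    have hiso : ∀ x, (V x)ᴴ * V x = 1 := fun x => by rw [← hV, hf, map_one]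
    have hVx : ∀ x, V x = V z * ρ (f (z, x)) := fun x =>
      eq_mul_of_conjTranspose_mul_eq (hiso z) (hiso x) (hρ _) (hV z x).symm
    refine ⟨fun x => (f (z, x))⁻¹, fun x y => hρinj ?_⟩
    calc ρ (f (x, y)) = (V z * ρ (f (z, x)))ᴴ * (V z * ρ (f (z, y))) := by
          rw [hV, ← hVx, ← hVx]
      _ = star (ρ (f (z, x))) * ρ (f (z, y)) := by
          rw [conjTranspose_mul, Matrix.mul_assoc, ← Matrix.mul_assoc (V z)ᴴ, hiso, one_mul,
            star_eq_conjTranspose]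
      _ = ρ ((f (z, x))⁻¹ * (f (z, y))⁻¹⁻¹) := by
          rw [ρ.star_apply_of_mem_unitary (hρ _), inv_inv, map_mul]

end Matrix

theorem stmt_5_general {Ω : Type*} [Group Ω] (d : ℕ)
    (ρ : Ω →* Matrix (Fin d) (Fin d) ℂ)
    (hρinj : Function.Injective ρ)
    (hρunitary : ∀ g : Ω, ρ g ∈ Matrix.unitaryGroup (Fin d) ℂ)
    (n : ℕ)
    (f : Fin n × Fin n → Ω) (hf : ∀ x, f (x, x) = 1) :
    (Matrix.of fun p q : Fin n × Fin d => ρ (f (p.1, q.1)) p.2 q.2).PosSemidef ↔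
      ∃ h : Fin n → Ω, ∀ x y : Fin n, f (x, y) = h x * (h y)⁻¹ := by
  let B : Matrix (Fin n) (Fin n) (Matrix (Fin d) (Fin d) ℂ) :=
    Matrix.of fun x y => ρ (f (x, y))
  refine ⟨fun hM => ?_, fun ⟨h, hh⟩ => ?_⟩
  · obtain ⟨V, hV⟩ := Matrix.PosSemidef.exists_comp_eq_gram (B := B) hM
    exact Matrix.exists_eq_mul_inv_of_map_eq_gram ρ hρinj hρunitary hf V hV
  · refine Matrix.posSemidef_comp_of_eq_gram (B := B) (fun x => ρ (h x)⁻¹) fun x y => ?_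
    rw [← Matrix.star_eq_conjTranspose, ρ.star_apply_of_mem_unitary (hρunitary _), inv_inv,
      ← map_mul, ← hh]
    rfl

/-- A synchronous group based game has a perfect (synchronous) deterministic strategy
if and only if the rule function `f` is positive definite, i.e. the block matrix
`(ρ(f(x,y)))_{x,y}` is positive semidefinite for a faithful unitary representation `ρ`. -/
theorem stmt_5 {Ω : Type*} [Group Ω] [Fintype Ω] (d : ℕ) (hd : 1 ≤ d)
    (ρ : Ω →* Matrix (Fin d) (Fin d) ℂ)
    (hρinj : Function.Injective ρ)
    (hρunitary : ∀ g : Ω, ρ g ∈ Matrix.unitaryGroup (Fin d) ℂ)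
    (n : ℕ) (hn : 1 ≤ n)
    (f : Fin n × Fin n → Ω) (hf : ∀ x, f (x, x) = 1) :
    (Matrix.of fun p q : Fin n × Fin d => ρ (f (p.1, q.1)) p.2 q.2).PosSemidef ↔
      ∃ h : Fin n → Ω, ∀ x y : Fin n, f (x, y) = h x * (h y)⁻¹ :=
  stmt_5_general d ρ hρinj hρunitary n f hf
end

section
/- Let A be a unital associative ℂ-algebra with involution * and let τ : A → ℂ be a linear functional with τ(1) = 1, τ(uv) = τ(vu) for all u,v ∈ A, and τ(u*) = conj(τ(u)) for all u ∈ A. Let X be a finite set and D ⊆ X × X a nonempty set with (x,x) ∉ D for all x and (x,y) ∈ D ⟹ (y,x) ∉ D. For each x ∈ X let (e_{x,a})_{a∈ℤ₃} be a family in A with e_{x,a}* = e_{x,a}, e_{x,a}·e_{x,a'} = 0 for a ≠ a', and Σ_{a∈ℤ₃} e_{x,a} = 1. Let ξ = e^{2πi/3} and U_x = e_{x,0} + ξ·e_{x,1} + ξ²·e_{x,2}. Then (1/(2|D|)) Σ_{(x,y)∈D} Σ_{a∈ℤ₃} [τ(e_{x,a}·e_{y,a+1}) + τ(e_{y,a+1}·e_{x,a})]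 = 1/3 + (2/(3|D|)) Σ_{(x,y)∈D} Re τ(ξ²·U_x*·U_y). (The left-hand side is the expected winning value of the synchronous density p(a,b|x,y) = τ(e_{x,a}e_{y,b}) for the directed graph game of (X,D) with uniform input density on edges.) -/
/-! Let `ψ` be the standard additive character of `ℤ₃`, so `ψ 1 = ξ`, `ξ² = ψ (-1)` and
`U x = ∑ a, ψ a • e x a`. The correlations `τ (e x a * e y b)` are real and sum to `τ 1 = 1`, so
`Re τ(ξ² U_x* U_y) = ∑ a b, Re ψ (b - a - 1) · τ (e x a * e y b)`. As `Re ψ k` is `1` for `k = 0`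
and `-1/2` otherwise, this is `(3 W - 1) / 2`, where `W = ∑ a, τ (e x a * e y (a + 1))` is the
probability of winning on the edge `(x, y)`; averaging over `D` gives the identity. -/

open Complex

lemma AddChar.re_apply_zmod_three {ψ : AddChar (ZMod 3) ℂ} (hψ : ψ ≠ 0) (k : ZMod 3) :
    (ψ k).re = if k = 0 then 1 else -1 / 2 := by
  have hsum : 1 + ψ 1 + starRingEnd ℂ (ψ 1) = 0 := by
    rw [← AddChar.sum_eq_zero_iff_ne_zero.mpr hψ, ← AddChar.map_neg_eq_conj, ← ψ.map_zero_eq_one]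
    exact (Fin.sum_univ_three (fun a : ZMod 3 => ψ a)).symm
  have hre : (ψ 1).re = -1 / 2 := by
    have := congrArg re hsum
    simp only [add_re, one_re, conj_re, zero_re] at this
    linarith
  rcases (by decide : ∀ k : ZMod 3, k = 0 ∨ k = 1 ∨ k = -1) k with rfl | rfl | rfl
  · simp
  · simpa using hre
  · simpa [AddChar.map_neg_eq_conj] using hre

lemma ZMod.stdAddChar_three_ne_zero : (ZMod.stdAddChar : AddChar (ZMod 3) ℂ) ≠ 0 := by
  intro h
  have := ZMod.injective_stdAddChar (N := 3) (a₁ := 1) (a₂ := 0) (by rw [h]; simp)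
  exact absurd this (by decide)

lemma ZMod.stdAddChar_three_one :
    (ZMod.stdAddChar : AddChar (ZMod 3) ℂ) 1 = Complex.exp (2 * Real.pi * Complex.I / 3) := by
  simpa using ZMod.stdAddChar_coe (N := 3) 1

lemma AddChar.sum_zmod_three_smul {M : Type*} [AddCommMonoid M] [Module ℂ M]
    (ψ : AddChar (ZMod 3) ℂ) (v : ZMod 3 → M) :
    ∑ a, ψ a • v a = v 0 + ψ 1 • v 1 + ψ 1 ^ 2 • v 2 := by
  have h2 : ψ 1 ^ 2 = ψ 2 := by rw [← ψ.map_nsmul_eq_pow]; rfl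
  rw [h2, ← one_smul ℂ (v 0), ← ψ.map_zero_eq_one]
  exact Fin.sum_univ_three (fun a : ZMod 3 => ψ a • v a)

section TracialFunctional

variable {A : Type*} [Ring A] [Algebra ℂ A] [StarRing A] (τ : A →ₗ[ℂ] ℂ)

lemma apply_star_sum_smul_mul_sum_smul (hτstar : ∀ u : A, τ (star u) = starRingEnd ℂ (τ u))
    {ι κ : Type*} [Fintype ι] [Fintype κ] (α : ι → ℂ) (β : κ → ℂ) {p : ι → A} {q : κ → A}
    (hp : ∀ i, IsSelfAdjoint (p i)) (hq : ∀ j, IsSelfAdjoint (q j)) :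
    τ (star (∑ i, α i • p i) * ∑ j, β j • q j) =
      ∑ i, ∑ j, starRingEnd ℂ (α i) * β j * τ (p i * q j) := by
  -- `A` is not a `StarModule`, so `star (α i • p i)` cannot be expanded; `hτstar` moves the
  -- adjoint onto the scalars instead.
  have hcol : ∀ j, τ (star (∑ i, α i • p i) * q j) =
      ∑ i, starRingEnd ℂ (α i) * τ (p i * q j) := fun j => by
    rw [← (hq j).star_eq, ← star_mul, hτstar, Finset.mul_sum, map_sum, map_sum]
    refine Finset.sum_congr rfl fun i _ => ?_
    rw [mul_smul_comm, map_smul, smul_eq_mul, map_mul, ← hτstar, star_mul, (hp i).star_eq,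
      (hq j).star_eq]
  simp only [Finset.mul_sum, mul_smul_comm, map_sum, map_smul, smul_eq_mul, hcol]
  rw [Finset.sum_comm]
  exact Finset.sum_congr rfl fun i _ => Finset.sum_congr rfl fun j _ => by ring

lemma conj_apply_mul_of_isSelfAdjoint (hτtr : ∀ u v : A, τ (u * v) = τ (v * u))
    (hτstar : ∀ u : A, τ (star u) = starRingEnd ℂ (τ u)) {p q : A}
    (hp : IsSelfAdjoint p) (hq : IsSelfAdjoint q) :
    starRingEnd ℂ (τ (p * q)) = τ (p * q) := by
  rw [← hτstar, star_mul, hp.star_eq, hq.star_eq, hτtr]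

local notation "ψ" => (ZMod.stdAddChar : AddChar (ZMod 3) ℂ)

lemma re_stdAddChar_neg_one_mul_apply_star_mul (hτ1 : τ 1 = 1)
    (hτtr : ∀ u v : A, τ (u * v) = τ (v * u))
    (hτstar : ∀ u : A, τ (star u) = starRingEnd ℂ (τ u)) {ex ey : ZMod 3 → A}
    (hex : ∀ a, IsSelfAdjoint (ex a)) (hey : ∀ b, IsSelfAdjoint (ey b))
    (hexsum : ∑ a, ex a = 1) (heysum : ∑ b, ey b = 1) :
    (((ψ (-1) * τ (star (∑ a, ψ a • ex a) * ∑ b, ψ b • ey b)).re : ℝ) : ℂ) =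
      (3 * ∑ a, τ (ex a * ey (a + 1)) - 1) / 2 := by
  set r : ZMod 3 → ZMod 3 → ℝ := fun a b => (τ (ex a * ey b)).re
  have hr : ∀ a b, τ (ex a * ey b) = r a b := fun a b =>
    (conj_eq_iff_re.mp (conj_apply_mul_of_isSelfAdjoint τ hτtr hτstar (hex a) (hey b))).symm
  have htot : ∑ a, ∑ b, r a b = 1 := by
    have h := congrArg τ (congrArg₂ (· * ·) hexsum heysum)
    simp only [Finset.sum_mul_sum, map_sum, mul_one, hτ1, hr] at h
    exact_mod_cast h
  have hweight : ∀ a b, (ψ (-1) * (starRingEnd ℂ (ψ a) * ψ b * r a b)).re =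
      3 / 2 * (if b = a + 1 then r a b else 0) - 1 / 2 * r a b := fun a b => by
    rw [← AddChar.map_neg_eq_conj, ← mul_assoc, ← mul_assoc, ← AddChar.map_add_eq_mul,
      ← AddChar.map_add_eq_mul, re_mul_ofReal,
      AddChar.re_apply_zmod_three ZMod.stdAddChar_three_ne_zero]
    have : -1 + -a + b = 0 ↔ b = a + 1 := by constructor <;> intro h <;> linear_combination h
    simp only [this]
    split_ifs <;> ring
  calc (((ψ (-1) * τ (star (∑ a, ψ a • ex a) * ∑ b, ψ b • ey b)).re : ℝ) : ℂ)
      = ((∑ a, ∑ b, (3 / 2 * (if b = a + 1 then r a b else 0) - 1 / 2 * r a b) : ℝ) : ℂ) := by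
        rw [apply_star_sum_smul_mul_sum_smul τ hτstar _ _ hex hey]
        simp only [hr, Finset.mul_sum, re_sum, hweight]
    _ = (3 * ∑ a, τ (ex a * ey (a + 1)) - 1) / 2 := by
        simp only [Finset.sum_sub_distrib, ← Finset.mul_sum, Finset.sum_ite_eq', Finset.mem_univ,
          if_true, htot, hr]
        push_cast
        ring

end TracialFunctional

theorem stmt_6_general {X : Type*} {A : Type*} [Ring A] [Algebra ℂ A] [StarRing A]
    (τ : A →ₗ[ℂ] ℂ) (hτ1 : τ 1 = 1)
    (hτtr : ∀ u v : A, τ (u * v) = τ (v * u))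
    (hτstar : ∀ u : A, τ (star u) = starRingEnd ℂ (τ u))
    (D : Finset (X × X)) (hDne : D.Nonempty)
    (e : X → ZMod 3 → A)
    (hestar : ∀ x a, star (e x a) = e x a)
    (hesum : ∀ x, ∑ a : ZMod 3, e x a = 1)
    (ξ : ℂ) (hξ : ξ = Complex.exp (2 * Real.pi * Complex.I / 3))
    (U : X → A) (hU : ∀ x, U x = e x 0 + ξ • e x 1 + ξ ^ 2 • e x 2) :
    (1 / (2 * (D.card : ℂ))) *
        ∑ p ∈ D, ∑ a : ZMod 3,
          (τ (e p.1 a * e p.2 (a + 1)) + τ (e p.2 (a + 1) * e p.1 a)) =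
      1 / 3 + (2 / (3 * (D.card : ℂ))) *
        ((∑ p ∈ D, (ξ ^ 2 * τ (star (U p.1) * U p.2)).re : ℝ) : ℂ) := by
  set ψ : AddChar (ZMod 3) ℂ := ZMod.stdAddChar
  have hψ1 : ψ 1 = ξ := hξ ▸ ZMod.stdAddChar_three_one
  have hUψ : ∀ x, U x = ∑ a, ψ a • e x a := fun x => by
    rw [hU, ψ.sum_zmod_three_smul, hψ1]
  have hξ2 : ξ ^ 2 = ψ (-1) := by
    rw [← hψ1, ← ψ.map_nsmul_eq_pow]; rfl
  have hW : ∀ p ∈ D, ∑ a : ZMod 3,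
      (τ (e p.1 a * e p.2 (a + 1)) + τ (e p.2 (a + 1) * e p.1 a)) =
        2 * ∑ a, τ (e p.1 a * e p.2 (a + 1)) := fun p _ => by
    simp only [hτtr (e p.2 _), ← two_mul, Finset.mul_sum]
  have hRe : ∀ p ∈ D, (((ξ ^ 2 * τ (star (U p.1) * U p.2)).re : ℝ) : ℂ) =
      (3 * ∑ a, τ (e p.1 a * e p.2 (a + 1)) - 1) / 2 := fun p _ => by
    rw [hξ2, hUψ, hUψ]
    exact re_stdAddChar_neg_one_mul_apply_star_mul τ hτ1 hτtr hτstar (hestar p.1) (hestar p.2)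
      (hesum p.1) (hesum p.2)
  have hcard : (D.card : ℂ) ≠ 0 := Nat.cast_ne_zero.mpr hDne.card_pos.ne'
  rw [Finset.sum_congr rfl hW, ofReal_sum, Finset.sum_congr rfl hRe, ← Finset.sum_div,
    Finset.sum_sub_distrib, ← Finset.mul_sum, ← Finset.mul_sum, Finset.sum_const, nsmul_one]
  field_simp
  ring

/-- The expected winning value of the synchronous density `p(a,b|x,y) = τ(e_{x,a} e_{y,b})`
for the directed graph game of `(X, D)` with the uniform density on edges equals
`1/3 + (2/(3|D|)) Σ_{(x,y) ∈ D} Re τ(ξ² U_x* U_y)`. -/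
theorem stmt_6 {X : Type*} [Fintype X] {A : Type*} [Ring A] [Algebra ℂ A] [StarRing A]
    (τ : A →ₗ[ℂ] ℂ) (hτ1 : τ 1 = 1)
    (hτtr : ∀ u v : A, τ (u * v) = τ (v * u))
    (hτstar : ∀ u : A, τ (star u) = starRingEnd ℂ (τ u))
    (D : Finset (X × X)) (hDne : D.Nonempty)
    (hD1 : ∀ x : X, (x, x) ∉ D)
    (hD2 : ∀ x y : X, (x, y) ∈ D → (y, x) ∉ D)
    (e : X → ZMod 3 → A)
    (hestar : ∀ x a, star (e x a) = e x a)
    (heorth : ∀ x a a', a ≠ a' → e x a * e x a' = 0)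
    (hesum : ∀ x, ∑ a : ZMod 3, e x a = 1)
    (ξ : ℂ) (hξ : ξ = Complex.exp (2 * Real.pi * Complex.I / 3))
    (U : X → A) (hU : ∀ x, U x = e x 0 + ξ • e x 1 + ξ ^ 2 • e x 2) :
    (1 / (2 * (D.card : ℂ))) *
        ∑ p ∈ D, ∑ a : ZMod 3,
          (τ (e p.1 a * e p.2 (a + 1)) + τ (e p.2 (a + 1) * e p.1 a)) =
      1 / 3 + (2 / (3 * (D.card : ℂ))) *
        ((∑ p ∈ D, (ξ ^ 2 * τ (star (U p.1) * U p.2)).re : ℝ) : ℂ) :=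
  stmt_6_general τ hτ1 hτtr hτstar D hDne e hestar hesum ξ hξ U hU
end

section
/- Let (X,D) be a directed graph: X a finite set, D ⊆ X × X with (x,x) ∉ D for all x and (x,y) ∈ D ⟹ (y,x) ∉ D. Then the following are equivalent: (i) there exist functions v, w : X → ℤ₃ such that for every (x,y) ∈ D one has w(y) = v(x) + 1 and v(y) = w(x) + 1 (a perfect deterministic strategy for the directed graph game); (ii) there exists a single function c : X → ℤ₃ such that c(y) = c(x) + 1 for every (x,y) ∈ D (a perfect synchronous deterministic strategy, i.e. a vertex 3-labelling). -/
theorem stmt_8_general {X : Type*} (D : Set (X × X)) :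
    (∃ v w : X → ZMod 3, ∀ x y : X, (x, y) ∈ D → w y = v x + 1 ∧ v y = w x + 1) ↔
      ∃ c : X → ZMod 3, ∀ x y : X, (x, y) ∈ D → c y = c x + 1 := by
  constructor
  · rintro ⟨v, w, hvw⟩
    -- Adding the two constraints raises `v + w` by `2 = -1` along every edge.
    refine ⟨fun x => -(v x + w x), fun x y hxy => ?_⟩
    obtain ⟨hw, hv⟩ := hvw x y hxy
    linear_combination (norm := (ring_nf; reduce_mod_char)) -hw - hv
  · rintro ⟨c, hc⟩
    exact ⟨c, c, fun x y hxy => ⟨hc x y hxy, hc x y hxy⟩⟩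

/-- A directed graph game has a perfect deterministic strategy if and only if it has a
perfect synchronous deterministic strategy (a vertex 3-labelling). -/
theorem stmt_8 {X : Type*} [Fintype X] (D : Set (X × X))
    (hD1 : ∀ x : X, (x, x) ∉ D)
    (hD2 : ∀ x y : X, (x, y) ∈ D → (y, x) ∉ D) :
    (∃ v w : X → ZMod 3, ∀ x y : X, (x, y) ∈ D → w y = v x + 1 ∧ v y = w x + 1) ↔
      ∃ c : X → ZMod 3, ∀ x y : X, (x, y) ∈ D → c y = c x + 1 :=
  stmt_8_general D
end

section
/- Let (X,D) be a directed graph: X a finite set, D ⊆ X × X with (x,x) ∉ D for all x and (x,y) ∈ D ⟹ (y,x) ∉ D. Then there exists a function c : X → ℤ₃ with c(y) = c(x) + 1 for every (x,y) ∈ D (a vertex 3-labelling) if and only if the net length of every cycle in (X,D) is divisible by 3; here a cycle is a tuple (x_1, …, x_m) of distinct vertices with m ≥ 3 such that for each i (indices taken mod m, so x_{m+1} = x_1) either (x_i, x_{i+1}) ∈ D or (x_{i+1}, x_i) ∈ D, and its net length is |{i : (x_i,x_{i+1}) ∈ D}| − |{i : (x_{i+1},x_i) ∈ D}|. -/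
/-!
Weight an arc `+1` when traversed forwards and `-1` when traversed backwards (`arcSign`); the net
length of a cycle is then its weight. A labelling is a potential for this weight, so the weight of
a cycle telescopes to `0` in `ℤ₃`. Conversely, if every cycle of the underlying simple graph has
weight `0`, so does every closed walk: `bypass` shortens a walk to a path by cutting off closed
subwalks, each a cycle or an edge traversed there and back. Hence walks with the same ends have
the same weight, and the weight of a walk from a fixed root of each connected component is a
labelling.
-/

namespace SimpleGraph.Walk

variable {V A : Type*} [AddCommGroup A] {G : SimpleGraph V} (w : V → V → A)

def weight {u v : V} (p : G.Walk u v) : A := (p.darts.map fun d => w d.fst d.snd).sum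

variable {w}

@[simp] lemma weight_nil {u : V} : (nil : G.Walk u u).weight w = 0 := rfl

@[simp] lemma weight_cons {u v x : V} (h : G.Adj u v) (p : G.Walk v x) :
    (cons h p).weight w = w u v + p.weight w := by
  simp [weight]

@[simp] lemma weight_append {u v x : V} (p : G.Walk u v) (q : G.Walk v x) :
    (p.append q).weight w = p.weight w + q.weight w := by
  simp [weight]

@[simp] lemma weight_copy {u v u' v' : V} (p : G.Walk u v) (hu : u = u') (hv : v = v') :
    (p.copy hu hv).weight w = p.weight w := by
  subst hu hv; rfl

lemma weight_eq_sum_getVert {u v : V} (p : G.Walk u v) :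
    p.weight w = ∑ i ∈ Finset.range p.length, w (p.getVert i) (p.getVert (i + 1)) := by
  induction p with
  | nil => rfl
  | cons h p ih =>
    rw [weight_cons, ih, length_cons, Finset.sum_range_succ', add_comm]
    simp only [getVert_cons_succ, zero_add, getVert_zero]

lemma weight_reverse (hw : ∀ a b, G.Adj a b → w b a = -w a b) {u v : V} (p : G.Walk u v) :
    p.reverse.weight w = -p.weight w := by
  induction p with
  | nil => simp
  | cons h p ih => simp [ih, hw _ _ h, add_comm]

lemma weight_cons_eq_zero_of_isPath (hw : ∀ a b, G.Adj a b → w b a = -w a b)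
    (hcyc : ∀ x (c : G.Walk x x), c.IsCycle → c.weight w = 0)
    {u v : V} (h : G.Adj u v) {p : G.Walk v u} (hp : p.IsPath) : (cons h p).weight w = 0 := by
  by_cases hlen : 3 ≤ (cons h p).length
  · exact hcyc u _ (isCycle_iff_isPath_tail_and_le_length.mpr ⟨by simpa using hp, hlen⟩)
  · have hp1 : p.length = 1 := by
      have : p.length ≠ 0 := fun h0 => h.ne (eq_of_length_eq_zero h0).symm
      simp only [length_cons] at hlen
      omega
    rw [weight_cons, weight_eq_sum_getVert, hp1, Finset.sum_range_one, getVert_zero,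
      p.getVert_of_length_le (by omega), hw _ _ h, add_neg_cancel]

lemma weight_bypass (hw : ∀ a b, G.Adj a b → w b a = -w a b)
    (hcyc : ∀ x (c : G.Walk x x), c.IsCycle → c.weight w = 0)
    [DecidableEq V] {u v : V} (p : G.Walk u v) : p.bypass.weight w = p.weight w := by
  induction p with
  | nil => rfl
  | @cons u v x h p ih =>
    simp only [bypass]
    split_ifs with hu
    · have hsplit := congrArg (weight w) (p.bypass.take_spec hu)
      rw [weight_append] at hsplit
      have hloop := weight_cons_eq_zero_of_isPath hw hcyc h (p.bypass_isPath.takeUntil hu)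
      rw [weight_cons] at hloop ⊢
      rw [← ih, ← hsplit, ← add_assoc, hloop, zero_add]
    · rw [weight_cons, weight_cons, ih]

lemma weight_eq_zero_of_forall_isCycle (hw : ∀ a b, G.Adj a b → w b a = -w a b)
    (hcyc : ∀ x (c : G.Walk x x), c.IsCycle → c.weight w = 0) {u : V} (p : G.Walk u u) :
    p.weight w = 0 := by
  classical
  rw [← weight_bypass hw hcyc, eq_nil_iff_nil.mpr (isPath_iff_nil.mp p.bypass_isPath), weight_nil]

lemma getVert_val_add_one {u : V} (c : G.Walk u u) {m : ℕ} [NeZero m] (hm : c.length = m)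
    (i : ZMod m) : c.getVert (i + 1).val = c.getVert (i.val + 1) := by
  rw [ZMod.val_add, ZMod.val_one_eq_one_mod, Nat.add_mod_mod]
  rcases (show i.val + 1 ≤ m from i.val_lt).lt_or_eq with h | h
  · rw [Nat.mod_eq_of_lt h]
  · rw [h, Nat.mod_self, getVert_zero, ← hm, getVert_length]

lemma adj_getVert_val_add_one {u : V} (c : G.Walk u u) {m : ℕ} [NeZero m] (hm : c.length = m)
    (i : ZMod m) : G.Adj (c.getVert i.val) (c.getVert (i + 1).val) := by
  rw [c.getVert_val_add_one hm]
  exact c.adj_getVert_succ (hm ▸ i.val_lt)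

lemma weight_eq_sum_zmod {u : V} (c : G.Walk u u) {m : ℕ} [NeZero m] (hm : c.length = m) :
    c.weight w = ∑ i : ZMod m, w (c.getVert i.val) (c.getVert (i + 1).val) := by
  rw [weight_eq_sum_getVert, hm]
  refine (Finset.sum_nbij ZMod.val (fun i _ => Finset.mem_range.mpr i.val_lt)
    (fun i _ j _ h => ZMod.val_injective m h) (fun k hk => ?_) ?_).symm
  · exact ⟨k, Finset.mem_coe.mpr (Finset.mem_univ _),
      ZMod.val_cast_of_lt (Finset.mem_range.mp hk)⟩
  · intro i _
    rw [c.getVert_val_add_one hm]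

lemma IsCycle.injective_getVert_val {u : V} {c : G.Walk u u} (hc : c.IsCycle) {m : ℕ}
    [NeZero m] (hm : c.length = m) : Function.Injective fun i : ZMod m => c.getVert i.val :=
  fun i j h => ZMod.val_injective m <|
    hc.getVert_injOn' (by simp only [Set.mem_ofPred_eq]; have := i.val_lt; omega)
      (by simp only [Set.mem_ofPred_eq]; have := j.val_lt; omega) h

end SimpleGraph.Walk

namespace SimpleGraph

open Walk

theorem exists_potential_of_forall_isCycle {V A : Type*} [AddCommGroup A] {G : SimpleGraph V}
    {w : V → V → A} (hw : ∀ a b, G.Adj a b → w b a = -w a b)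
    (hcyc : ∀ x (c : G.Walk x x), c.IsCycle → c.weight w = 0) :
    ∃ c : V → A, ∀ a b, G.Adj a b → c b = c a + w a b := by
  have hroot (v : V) : G.Reachable (G.connectedComponentMk v).out v :=
    ConnectedComponent.exact (G.connectedComponentMk v).out_eq
  refine ⟨fun v => (hroot v).some.weight w, fun a b hab => ?_⟩
  have hsame : (G.connectedComponentMk b).out = (G.connectedComponentMk a).out := by
    rw [ConnectedComponent.connectedComponentMk_eq_of_adj hab]
  have hloop := weight_eq_zero_of_forall_isCycle hw hcyc
    ((((hroot a).some.concat hab).append ((hroot b).some.copy hsame rfl).reverse))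
  rw [weight_append, weight_reverse hw, weight_copy, concat, weight_append, weight_cons,
    weight_nil, add_zero, ← sub_eq_add_neg, sub_eq_zero] at hloop
  exact hloop.symm

end SimpleGraph

section ArcSign

variable {X : Type*} (R : Type*) [AddCommGroupWithOne R] (D : Set (X × X))

noncomputable def arcSign (a b : X) : R := D.indicator 1 (a, b) - D.indicator 1 (b, a)

variable {R D}

lemma arcSign_swap (a b : X) : arcSign R D b a = -arcSign R D a b :=
  (neg_sub _ _).symm

lemma arcSign_of_mem (hD : ∀ x y, (x, y) ∈ D → (y, x) ∉ D) {a b : X} (h : (a, b) ∈ D) :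
    arcSign R D a b = 1 := by
  simp [arcSign, h, hD _ _ h]

lemma sum_arcSign {ι : Type*} [Fintype ι] (p q : ι → X) :
    ∑ i, arcSign R D (p i) (q i) =
      (Set.ncard {i | (p i, q i) ∈ D} : R) - Set.ncard {i | (q i, p i) ∈ D} := by
  classical
  simp only [arcSign, Finset.sum_sub_distrib, Set.indicator_apply, Pi.one_apply,
    Finset.sum_boole, Set.ncard_eq_toFinset_card', Set.toFinset_ofPred]

lemma sum_arcSign_eq_zero_of_labelling (hD : ∀ x y, (x, y) ∈ D → (y, x) ∉ D) (c : X → R)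
    (hc : ∀ x y, (x, y) ∈ D → c y = c x + 1) {m : ℕ} [NeZero m] (x : ZMod m → X)
    (hadj : ∀ i, (x i, x (i + 1)) ∈ D ∨ (x (i + 1), x i) ∈ D) :
    ∑ i, arcSign R D (x i) (x (i + 1)) = 0 :=
  calc ∑ i, arcSign R D (x i) (x (i + 1)) = ∑ i, (c (x (i + 1)) - c (x i)) := by
        refine Finset.sum_congr rfl fun i _ => ?_
        rcases hadj i with h | h
        · rw [arcSign_of_mem hD h, hc _ _ h, add_sub_cancel_left]
        · rw [arcSign_swap, arcSign_of_mem hD h, hc _ _ h, sub_add_cancel_left]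
    _ = 0 := by
        rw [Finset.sum_sub_distrib, sub_eq_zero]
        exact Fintype.sum_equiv (Equiv.addRight 1) _ _ fun _ => rfl

end ArcSign

open SimpleGraph in
theorem stmt_9_general {X : Type*} (D : Set (X × X))
    (hD2 : ∀ x y : X, (x, y) ∈ D → (y, x) ∉ D) :
    (∃ c : X → ZMod 3, ∀ x y : X, (x, y) ∈ D → c y = c x + 1) ↔
      ∀ (m : ℕ), 3 ≤ m → ∀ x : ZMod m → X, Function.Injective x →
        (∀ i : ZMod m, (x i, x (i + 1)) ∈ D ∨ (x (i + 1), x i) ∈ D) →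
        (3 : ℤ) ∣ ((Set.ncard {i : ZMod m | (x i, x (i + 1)) ∈ D} : ℤ) -
          (Set.ncard {i : ZMod m | (x (i + 1), x i) ∈ D} : ℤ)) := by
  constructor
  · rintro ⟨c, hc⟩ m hm x - hadj
    have : NeZero m := ⟨by omega⟩
    refine (ZMod.intCast_zmod_eq_zero_iff_dvd _ 3).mp ?_
    push_cast
    rw [← sum_arcSign]
    exact sum_arcSign_eq_zero_of_labelling hD2 c hc x hadj
  · intro hcyc
    have hweight : ∀ u (p : (fromRel fun a b => (a, b) ∈ D).Walk u u), p.IsCycle →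
        p.weight (arcSign (ZMod 3) D) = 0 := by
      intro u p hp
      have hm := hp.three_le_length
      have : NeZero p.length := ⟨by omega⟩
      have hdvd := hcyc _ hm _ (hp.injective_getVert_val rfl) fun i =>
        ((fromRel_adj _ _ _).mp (p.adj_getVert_val_add_one rfl i)).2
      rw [p.weight_eq_sum_zmod rfl, sum_arcSign]
      simpa using (ZMod.intCast_zmod_eq_zero_iff_dvd _ 3).mpr hdvd
    obtain ⟨c, hc⟩ := exists_potential_of_forall_isCycle (fun a b _ => arcSign_swap a b) hweight
    refine ⟨c, fun a b hab => ?_⟩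
    have hne : a ≠ b := by rintro rfl; exact hD2 a a hab hab
    rw [hc a b ((fromRel_adj _ _ _).mpr ⟨hne, Or.inl hab⟩), arcSign_of_mem hD2 hab]

/-- A directed graph has a vertex 3-labelling if and only if the net length of every
cycle is divisible by 3. Cycles are indexed by `ZMod m` (so indices are taken mod `m`). -/
theorem stmt_9 {X : Type*} [Fintype X] (D : Set (X × X))
    (hD1 : ∀ x : X, (x, x) ∉ D)
    (hD2 : ∀ x y : X, (x, y) ∈ D → (y, x) ∉ D) :
    (∃ c : X → ZMod 3, ∀ x y : X, (x, y) ∈ D → c y = c x + 1) ↔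
      ∀ (m : ℕ), 3 ≤ m → ∀ x : ZMod m → X, Function.Injective x →
        (∀ i : ZMod m, (x i, x (i + 1)) ∈ D ∨ (x (i + 1), x i) ∈ D) →
        (3 : ℤ) ∣ ((Set.ncard {i : ZMod m | (x i, x (i + 1)) ∈ D} : ℤ) -
          (Set.ncard {i : ZMod m | (x (i + 1), x i) ∈ D} : ℤ)) :=
  stmt_9_general D hD2
end

section
/- Let k ≥ 4 be an integer not divisible by 3. Then the maximum over all functions w : ℤ_k → ℤ₃ of the cardinality of {x ∈ ℤ_k : w(x+1) = w(x) + 1} equals k − 1. Equivalently, the synchronous deterministic value of the directed k-cycle game is 1 − 1/k. -/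
/-!
If `w (x + 1) = w x + 1` held at every `x ∈ ℤ_k`, walking once around the cycle would give
`w 0 = w 0 + k` in `ℤ₃`, impossible when `3 ∤ k`; so at most `k - 1` edges are satisfied.
Conversely `w x = x.val mod 3` satisfies every edge except the wrap-around one from `-1` to `0`.
-/

namespace ZMod

variable {k : ℕ}

lemma val_add_one_of_ne_neg_one [NeZero k] {x : ZMod k} (hx : x ≠ -1) :
    (x + 1).val = x.val + 1 := by
  obtain ⟨n, rfl⟩ := Nat.exists_eq_succ_of_ne_zero (NeZero.ne k)
  have hxn : x.val ≠ n := fun h => hx (val_injective _ (h.trans (val_neg_one n).symm))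
  have hlt : x.val + 1 < n + 1 := by have := x.val_lt; omega
  rw [val_add, val_one_eq_one_mod, Nat.one_mod_eq_one.mpr (by omega), Nat.mod_eq_of_lt hlt]

lemma natCast_eq_zero_of_forall_map_add_one {G : Type*} [AddGroupWithOne G] {w : ZMod k → G}
    (hw : ∀ x, w (x + 1) = w x + 1) : (k : G) = 0 := by
  have walk : ∀ n : ℕ, w n = w 0 + n := by
    intro n
    induction n with
    | zero => simp
    | succ m ih => push_cast; rw [hw, ih, add_assoc]
  simpa [natCast_self] using walk k

lemma setOf_natCast_val_add_one_eq_compl {R : Type*} [AddGroupWithOne R] [NeZero k]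
    (hk : (k : R) ≠ 0) :
    {x : ZMod k | ((x + 1).val : R) = x.val + 1} = {-1}ᶜ := by
  ext x
  by_cases hx : x = -1
  · subst hx
    obtain ⟨n, rfl⟩ := Nat.exists_eq_succ_of_ne_zero (NeZero.ne k)
    simpa [val_neg_one, eq_comm] using hk
  · simp [hx, val_add_one_of_ne_neg_one hx]

end ZMod

theorem stmt_10_general (k : ℕ) (h3 : ¬ (3 ∣ k)) :
    IsGreatest {n : ℕ | ∃ w : ZMod k → ZMod 3,
      n = Set.ncard {x : ZMod k | w (x + 1) = w x + 1}} (k - 1) := by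
  have : NeZero k := ⟨by rintro rfl; exact h3 (dvd_zero 3)⟩
  have hk3 : (k : ZMod 3) ≠ 0 := by rwa [Ne, ZMod.natCast_eq_zero_iff]
  refine ⟨⟨fun x => (x.val : ZMod 3), ?_⟩, ?_⟩
  · rw [ZMod.setOf_natCast_val_add_one_eq_compl hk3, Set.ncard_compl, Set.ncard_singleton,
      Nat.card_zmod]
  · rintro _ ⟨w, rfl⟩
    have hne : {x : ZMod k | w (x + 1) = w x + 1} ≠ Set.univ := fun h =>
      hk3 (ZMod.natCast_eq_zero_of_forall_map_add_one fun x => h.symm ▸ Set.mem_univ x)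
    have := Set.ncard_lt_card hne
    rw [Nat.card_zmod] at this
    omega

/-- For `k ≥ 4` not divisible by 3, the synchronous deterministic value of the directed
`k`-cycle game is `1 - 1/k`: the maximum over `w : ℤ_k → ℤ₃` of
`|{x : w(x+1) = w(x) + 1}|` equals `k - 1`. -/
theorem stmt_10 (k : ℕ) (hk : 4 ≤ k) (h3 : ¬ (3 ∣ k)) :
    IsGreatest {n : ℕ | ∃ w : ZMod k → ZMod 3,
      n = Set.ncard {x : ZMod k | w (x + 1) = w x + 1}} (k - 1) :=
  stmt_10_general k h3
end

section
/- Let k ≥ 4 be an integer not divisible by 3, let θ = 2π/(3k), c = cos θ, t = (1 + 2c)/3, and α = 2(1 − c)/3. Let S_n denote the n × n cyclic shift matrix (S_n e_j = e_{j+1}, indices mod n) and ⊗ the Kronecker product. Then the real symmetric 3k × 3k matrix t·I_{3k} + (α/2)·(I_k ⊗ (S_3 + S_3ᵀ)) − (1/2)·((S_k ⊗ S_3) + (S_k ⊗ S_3)ᵀ) is positive semidefinite. (This is the matrix inequality establishing the upper bound ω_qc^s(C_k^d) ≤ (1 + 2cos(2π/(3k)))/3 for the directed k-cycle game.) -/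
/-!
Indexing by the group `G = ℤ/k × ℤ/3`, the matrix is the circulant matrix of a function `f` on
`G` supported on `0, ±(0,1), ±(1,1)`. By Fourier analysis on `G`, `|G| ⟨Mx, x⟩` is the sum over
the characters `ψ` of `f̂(ψ) |x̂(ψ)|²`, so it suffices that
`f̂(ψ) = t + α Re ω - Re z ≥ 0`, where `ω = ψ(0,1)` is a cube root of unity and `z = ψ(1,1)`
is a `3k`-th root of unity with `z^k = ω^k`. If `ω = 1` then `t + α = 1` and `f̂(ψ) = 1 - Re z`.
Otherwise `Re ω = -1/2`, and `3 ∤ k` forces `ω^k ≠ 1`, hence `z ≠ 1` and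
`Re z ≤ cos (2π/3k) = t - α/2`.
-/

open Matrix
open scoped Kronecker

/-- The `n × n` cyclic forward shift matrix `e_j ↦ e_{j+1}` (indices mod `n`). -/
def cyclicShift (n : ℕ) : Matrix (Fin n) (Fin n) ℝ :=
  Matrix.of fun i j => if (i : ℕ) = ((j : ℕ) + 1) % n then 1 else 0

open ComplexConjugate Real

theorem AddChar.card_mul_eq_sum_mul_conj {G : Type*} [AddCommGroup G] [Fintype G]
    [DecidableEq G] (f : G → ℂ) (g : G) :
    (Fintype.card G : ℂ) * f g = ∑ ψ : AddChar G ℂ, (∑ h, f h * ψ h) * conj (ψ g) := by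
  have hsub : ∀ (ψ : AddChar G ℂ) h, ψ h * conj (ψ g) = ψ (h - g) := fun ψ h => by
    rw [sub_eq_add_neg, map_add_eq_mul, map_neg_eq_conj]
  simp_rw [Finset.sum_mul, mul_assoc, hsub]
  rw [Finset.sum_comm]
  simp_rw [← Finset.mul_sum, sum_apply_eq_ite, sub_eq_zero, mul_ite, mul_zero,
    Finset.sum_ite_eq', Finset.mem_univ, if_true, mul_comm]

namespace Matrix

theorem kronecker_circulant {m n α : Type*} [Sub m] [Sub n] [Mul α] (v : m → α) (w : n → α) :
    circulant v ⊗ₖ circulant w = circulant fun g => v g.1 * w g.2 :=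
  rfl

variable {G : Type*} [AddCommGroup G] [Fintype G] [DecidableEq G]

theorem card_mul_dotProduct_circulant_mulVec (f x : G → ℝ) :
    ((Fintype.card G * (x ⬝ᵥ circulant f *ᵥ x) : ℝ) : ℂ) =
      ∑ ψ : AddChar G ℂ, (∑ g, (f g : ℂ) * ψ g) * Complex.normSq (∑ v, (x v : ℂ) * ψ v) := by
  have hconj : ∀ (ψ : AddChar G ℂ) u v, conj (ψ (u - v)) = conj (ψ u) * ψ v := fun ψ u v => by
    rw [sub_eq_add_neg, AddChar.map_add_eq_mul, AddChar.map_neg_eq_conj, map_mul,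
      Complex.conj_conj]
  set F : AddChar G ℂ → ℂ := fun ψ => ∑ g, (f g : ℂ) * ψ g
  calc ((Fintype.card G * (x ⬝ᵥ circulant f *ᵥ x) : ℝ) : ℂ)
      = ∑ u, ∑ v, (x u : ℂ) * x v * ((Fintype.card G : ℂ) * f (u - v)) := by
        simp only [dotProduct, mulVec, circulant_apply, Finset.mul_sum]
        push_cast
        exact Finset.sum_congr rfl fun u _ => Finset.sum_congr rfl fun v _ => by ring
    _ = ∑ u, ∑ v, ∑ ψ, F ψ * ((x u : ℂ) * conj (ψ u) * (x v * ψ v)) := by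
        simp_rw [AddChar.card_mul_eq_sum_mul_conj (fun g => (f g : ℂ)), hconj, Finset.mul_sum]
        exact Finset.sum_congr rfl fun u _ => Finset.sum_congr rfl fun v _ =>
          Finset.sum_congr rfl fun ψ _ => by ring
    _ = ∑ ψ, F ψ * (conj (∑ u, (x u : ℂ) * ψ u) * ∑ v, (x v : ℂ) * ψ v) := by
        simp_rw [map_sum (starRingEnd ℂ), map_mul, Complex.conj_ofReal, Finset.sum_mul_sum,
          Finset.mul_sum]
        exact (Finset.sum_congr rfl fun u _ => Finset.sum_comm).trans Finset.sum_comm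
    _ = _ := by simp_rw [Complex.normSq_eq_conj_mul_self]; rfl

theorem posSemidef_circulant {f : G → ℝ} (hsymm : ∀ g, f (-g) = f g)
    (hf : ∀ ψ : AddChar G ℂ, 0 ≤ (∑ g, (f g : ℂ) * ψ g).re) : (circulant f).PosSemidef := by
  refine .of_dotProduct_mulVec_nonneg (isHermitian_iff_isSymm.2 (circulant_isSymm_iff.2 hsymm))
    fun x => ?_
  have h := congrArg Complex.re (card_mul_dotProduct_circulant_mulVec f x)
  rw [Complex.ofReal_re, Complex.re_sum] at h
  simp only [Complex.re_mul_ofReal] at h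
  have hnonneg : 0 ≤ (Fintype.card G : ℝ) * (x ⬝ᵥ circulant f *ᵥ x) :=
    h ▸ Finset.sum_nonneg fun ψ _ => mul_nonneg (hf ψ) (Complex.normSq_nonneg _)
  exact nonneg_of_mul_nonneg_right hnonneg (by exact_mod_cast Fintype.card_pos)

end Matrix

theorem Real.cos_two_pi_mul_div_le_cos_two_pi_div {i n : ℕ} (hi : 0 < i) (hin : i < n) :
    cos (2 * π * i / n) ≤ cos (2 * π / n) := by
  have hn : (0 : ℝ) < n := by exact_mod_cast hi.trans hin
  wlog h : 2 * i ≤ n generalizing i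
  · have key := this (i := n - i) (by omega) (by omega) (by omega)
    rwa [Nat.cast_sub hin.le, mul_sub, sub_div, mul_div_cancel_right₀ _ hn.ne', cos_two_pi_sub]
      at key
  have h' : (2 * i : ℝ) ≤ n := by exact_mod_cast h
  have h1 : (1 : ℝ) ≤ i := by exact_mod_cast hi
  apply cos_le_cos_of_nonneg_of_le_pi (by positivity)
  · rw [div_le_iff₀ hn]; nlinarith [pi_pos]
  · exact div_le_div_of_nonneg_right (le_mul_of_one_le_right (by positivity) h1) hn.le

theorem Complex.re_le_cos_two_pi_div_of_pow_eq_one {z : ℂ} {n : ℕ} (hn : n ≠ 0) (hz : z ^ n = 1)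
    (h1 : z ≠ 1) : z.re ≤ Real.cos (2 * π / n) := by
  have : NeZero n := ⟨hn⟩
  obtain ⟨i, hin, rfl⟩ := (isPrimitiveRoot_exp n hn).eq_pow_of_pow_eq_one hz
  have hi : 0 < i := Nat.pos_of_ne_zero (by rintro rfl; exact h1 (pow_zero _))
  rw [← exp_nat_mul, show (i : ℂ) * (2 * π * I / n) = ((2 * π * i / n : ℝ) : ℂ) * I by
    push_cast; ring, exp_ofReal_mul_I_re]
  exact Real.cos_two_pi_mul_div_le_cos_two_pi_div hi hin

theorem Complex.re_eq_neg_half_of_pow_three_eq_one {ω : ℂ} (h3 : ω ^ 3 = 1) (h1 : ω ≠ 1) :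
    ω.re = -1 / 2 := by
  have hquad : ω ^ 2 + ω + 1 = 0 := by
    have : (ω - 1) * (ω ^ 2 + ω + 1) = 0 := by linear_combination h3
    exact (mul_eq_zero.1 this).resolve_left (sub_ne_zero.2 h1)
  have hre := congrArg re hquad
  have him := congrArg im hquad
  simp only [pow_two, add_re, mul_re, one_re, zero_re, add_im, mul_im, one_im, zero_im]
    at hre him
  have : ω.im * (2 * ω.re + 1) = 0 := by linarith
  rcases mul_eq_zero.1 this with him0 | hre0
  · rw [him0] at hre; nlinarith [sq_nonneg (ω.re + 1 / 2)]
  · linarith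

theorem cyclicShift_eq_circulant (n : ℕ) [NeZero n] :
    cyclicShift n = circulant (Pi.single 1 1) := by
  ext i j
  simp [cyclicShift, circulant_apply, Pi.single_apply, sub_eq_iff_eq_add, Fin.ext_iff,
    Fin.val_add, add_comm]

section CycleGame

variable (k : ℕ) [NeZero k]

noncomputable def cycleGameSymbol (t α : ℝ) : Fin k × Fin 3 → ℝ :=
  t • Pi.single 0 1 + (α / 2) • (Pi.single (0, 1) 1 + Pi.single (-(0, 1)) 1)
    - (1 / 2 : ℝ) • (Pi.single (1, 1) 1 + Pi.single (-(1, 1)) 1)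

theorem circulant_cycleGameSymbol (t α : ℝ) :
    t • (1 : Matrix (Fin k × Fin 3) (Fin k × Fin 3) ℝ) +
      (α / 2) • ((1 : Matrix (Fin k) (Fin k) ℝ) ⊗ₖ (cyclicShift 3 + (cyclicShift 3)ᵀ)) -
      (1 / 2 : ℝ) • ((cyclicShift k ⊗ₖ cyclicShift 3) + (cyclicShift k ⊗ₖ cyclicShift 3)ᵀ) =
    circulant (cycleGameSymbol k t α) := by
  simp only [cyclicShift_eq_circulant, ← circulant_single_one, transpose_circulant,
    ← circulant_add, kronecker_circulant, ← circulant_smul, ← circulant_sub]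
  congr 1
  funext g
  simp only [cycleGameSymbol, Pi.single_apply, neg_eq_iff_eq_neg, Pi.add_apply, Pi.sub_apply,
    Pi.smul_apply, smul_eq_mul, Prod.ext_iff, Prod.fst_neg, Prod.snd_neg, Prod.fst_zero,
    Prod.snd_zero, ite_and, ite_mul, mul_ite, one_mul, zero_mul, mul_one, mul_zero, neg_zero]
  split_ifs <;> ring

theorem cycleGameSymbol_neg (t α : ℝ) (g : Fin k × Fin 3) :
    cycleGameSymbol k t α (-g) = cycleGameSymbol k t α g := by
  simp only [cycleGameSymbol, Pi.sub_apply, Pi.add_apply, Pi.smul_apply, Pi.single_apply,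
    neg_eq_iff_eq_neg, neg_zero, neg_neg]
  ring

theorem re_sum_cycleGameSymbol_mul (t α : ℝ) (ψ : AddChar (Fin k × Fin 3) ℂ) :
    (∑ g, (cycleGameSymbol k t α g : ℂ) * ψ g).re = t + α * (ψ (0, 1)).re - (ψ (1, 1)).re := by
  simp only [cycleGameSymbol, smul_add, one_div, Pi.sub_apply, Pi.add_apply, Pi.smul_apply,
    Pi.single_apply, smul_eq_mul, mul_ite, mul_one, mul_zero, Complex.ofReal_sub,
    Complex.ofReal_add, sub_mul, add_mul, Finset.sum_sub_distrib, Finset.sum_add_distrib,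
    Complex.sub_re, Complex.add_re, Complex.re_sum, Complex.mul_re, Complex.ofReal_re, ite_mul,
    zero_mul, Complex.ofReal_im, sub_zero, Finset.sum_ite_eq', Finset.mem_univ, if_true,
    AddChar.map_zero_eq_one, Complex.one_re, AddChar.map_neg_eq_conj, Complex.conj_re]
  ring

theorem re_sum_cycleGameSymbol_mul_nonneg (h3 : ¬ 3 ∣ k) (ψ : AddChar (Fin k × Fin 3) ℂ) :
    0 ≤ (∑ g, (cycleGameSymbol k ((1 + 2 * cos (2 * π / (3 * k))) / 3)
      (2 * (1 - cos (2 * π / (3 * k))) / 3) g : ℂ) * ψ g).re := by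
  rw [re_sum_cycleGameSymbol_mul]
  set ω := ψ (0, 1)
  set z := ψ (1, 1)
  have hω : ω ^ 3 = 1 := by
    rw [← AddChar.map_nsmul_eq_pow, show 3 • ((0, 1) : Fin k × Fin 3) = 0 by
      rw [Prod.smul_mk, smul_zero]; rfl, AddChar.map_zero_eq_one]
  have hz : z ^ (3 * k) = 1 := by
    rw [← AddChar.map_nsmul_eq_pow, show 3 * k = Fintype.card (Fin k × Fin 3) by simp [mul_comm],
      card_nsmul_eq_zero, AddChar.map_zero_eq_one]
  have hzk : z ^ k = ω ^ k := by
    have : k • (1 : Fin k) = k • 0 := by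
      simpa using card_nsmul_eq_zero (x := (1 : Fin k))
    rw [← AddChar.map_nsmul_eq_pow, ← AddChar.map_nsmul_eq_pow, Prod.smul_mk, Prod.smul_mk, this]
  by_cases hω1 : ω = 1
  · have : z.re ≤ 1 := (Complex.re_le_norm z).trans (AddChar.norm_apply ψ _).le
    rw [hω1, Complex.one_re]
    linarith
  · have hωk : ω ^ k ≠ 1 := by
      have hord : orderOf ω = 3 :=
        (Nat.prime_three.eq_one_or_self_of_dvd _ (orderOf_dvd_of_pow_eq_one hω)).resolve_left
          (by rwa [orderOf_eq_one_iff])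
      exact fun h => h3 (hord ▸ orderOf_dvd_of_pow_eq_one h)
    have hz1 : z ≠ 1 := fun h => hωk (by rw [← hzk, h, one_pow])
    have hzre := Complex.re_le_cos_two_pi_div_of_pow_eq_one
      (mul_ne_zero three_ne_zero (NeZero.ne k)) hz hz1
    rw [Complex.re_eq_neg_half_of_pow_three_eq_one hω hω1]
    push_cast at hzre
    linarith

end CycleGame

theorem stmt_14_general (k : ℕ) (h3 : ¬ (3 ∣ k)) :
    (((1 + 2 * Real.cos (2 * Real.pi / (3 * k))) / 3) •
        (1 : Matrix (Fin k × Fin 3) (Fin k × Fin 3) ℝ) +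
      ((2 * (1 - Real.cos (2 * Real.pi / (3 * k))) / 3) / 2) •
        ((1 : Matrix (Fin k) (Fin k) ℝ) ⊗ₖ (cyclicShift 3 + (cyclicShift 3)ᵀ)) -
      (1 / 2 : ℝ) •
        ((cyclicShift k ⊗ₖ cyclicShift 3) + (cyclicShift k ⊗ₖ cyclicShift 3)ᵀ)).PosSemidef := by
  have : NeZero k := ⟨by rintro rfl; exact h3 (dvd_zero 3)⟩
  rw [circulant_cycleGameSymbol]
  exact posSemidef_circulant (cycleGameSymbol_neg k _ _) (re_sum_cycleGameSymbol_mul_nonneg k h3)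

/-- The matrix inequality establishing the upper bound
`ω_qc^s(C_k^d) ≤ (1 + 2cos(2π/3k))/3` for the directed `k`-cycle game. -/
theorem stmt_14 (k : ℕ) (hk : 4 ≤ k) (h3 : ¬ (3 ∣ k)) :
    (((1 + 2 * Real.cos (2 * Real.pi / (3 * k))) / 3) •
        (1 : Matrix (Fin k × Fin 3) (Fin k × Fin 3) ℝ) +
      ((2 * (1 - Real.cos (2 * Real.pi / (3 * k))) / 3) / 2) •
        ((1 : Matrix (Fin k) (Fin k) ℝ) ⊗ₖ (cyclicShift 3 + (cyclicShift 3)ᵀ)) -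
      (1 / 2 : ℝ) •
        ((cyclicShift k ⊗ₖ cyclicShift 3) + (cyclicShift k ⊗ₖ cyclicShift 3)ᵀ)).PosSemidef :=
  stmt_14_general k h3
end

section
/- There exist a unit vector η ∈ ℝ⁵ and a family of vectors v : ℤ₄ × ℤ₃ → ℝ⁵ such that: ⟨v(x,a), v(x,a')⟩ = 0 for every x ∈ ℤ₄ and all a ≠ a' in ℤ₃; Σ_{a∈ℤ₃} v(x,a) = η for every x ∈ ℤ₄; ⟨v(x,a), v(y,b)⟩ ≥ 0 for all x,y ∈ ℤ₄ and a,b ∈ ℤ₃; and (1/4) Σ_{x∈ℤ₄} Σ_{a∈ℤ₃} ⟨v(x,a), v(x+1,a+1)⟩ = 2(1 − 1/√3). (That is, the synchronous vect-value of the directed 4-cycle game is at least 2(1 − 1/√3); combined with the matching upper bound, ω_vect(C₄^d) = ω_vect^s(C₄^d) = 2(1 − 1/√3).) -/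
/-!
Identify `ℝ⁵` with `ℝ × ℂ × ℂ` and take, with `ζ = exp(-2πi/3)`,
`v(x, a) = (1/3, β iˣ ζᵃ, γ (-1)ˣ ζ⁻ᵃ)` and `η = (1, 0, 0)`.
Since `x ↦ iˣ`, `x ↦ (-1)ˣ` and `a ↦ ζᵃ` are characters, `⟨v(x,a), v(y,b)⟩` depends only on
`(y - x, b - a)`, which leaves twelve numbers to check. The `ℂ`-components of `v(x, ·)` sum to
zero, and `v(x, a) ⊥ v(x, a')` for `a ≠ a'` amounts to `β² + γ² = 2/9` because `Re ζ = -1/2`.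
Every edge contributes the same value `(6 - 2√3)/9`, and `3 · (6 - 2√3)/9 = 2(1 - 1/√3)`.
-/

open scoped InnerProductSpace ComplexConjugate

lemma AddChar.conj_apply_mul_apply {G : Type*} [AddCommGroup G] [Finite G]
    (ψ : AddChar G ℂ) (x y : G) : conj (ψ x) * ψ y = ψ (y - x) := by
  rw [← map_neg_eq_conj, ← map_add_eq_mul, neg_add_eq_sub]

lemma AddChar.re_conj_ofReal_mul_mul {G H : Type*} [AddCommGroup G] [Finite G] [AddCommGroup H]
    [Finite H] (ψ : AddChar G ℂ) (φ : AddChar H ℂ) (r : ℝ) (x y : G) (a b : H) :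
    (conj (r * (ψ x * φ a)) * (r * (ψ y * φ b))).re = r ^ 2 * (ψ (y - x) * φ (b - a)).re := by
  rw [← Complex.re_ofReal_mul, ← ψ.conj_apply_mul_apply, ← φ.conj_apply_mul_apply]
  simp only [map_mul, Complex.conj_ofReal, Complex.ofReal_pow]
  congr 1
  ring

noncomputable def toEuclidean5 (t : ℝ) (z w : ℂ) : EuclideanSpace ℝ (Fin 5) :=
  !₂[t, z.re, z.im, w.re, w.im]

lemma inner_toEuclidean5 (t t' : ℝ) (z z' w w' : ℂ) :
    ⟪toEuclidean5 t z w, toEuclidean5 t' z' w'⟫_ℝ =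
      t * t' + (conj z * z').re + (conj w * w').re := by
  simp [toEuclidean5, PiLp.inner_apply, Fin.sum_univ_five]
  ring

lemma sum_toEuclidean5 {ι : Type*} (s : Finset ι) (t : ι → ℝ) (z w : ι → ℂ) :
    ∑ i ∈ s, toEuclidean5 (t i) (z i) (w i) =
      toEuclidean5 (∑ i ∈ s, t i) (∑ i ∈ s, z i) (∑ i ∈ s, w i) := by
  ext j
  fin_cases j <;> simp [toEuclidean5, Complex.re_sum, Complex.im_sum]

lemma norm_toEuclidean5 (t : ℝ) (z w : ℂ) :
    ‖toEuclidean5 t z w‖ = √(t ^ 2 + ‖z‖ ^ 2 + ‖w‖ ^ 2) := by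
  rw [EuclideanSpace.norm_eq]
  simp [toEuclidean5, Fin.sum_univ_five, Complex.sq_norm, Complex.normSq_apply]
  ring_nf

lemma sqrt_three_sq : √3 ^ 2 = 3 := Real.sq_sqrt (by norm_num)

lemma sqrt_three_bounds : 1.7 < √3 ∧ √3 < 1.8 := by
  constructor <;> nlinarith [sqrt_three_sq, Real.sqrt_nonneg 3]

namespace DirectedC4

noncomputable section

/-- `ζ = exp(-2πi/3)` -/
def zeta : ℂ := ⟨-1 / 2, -√3 / 2⟩

lemma zeta_pow_three : zeta ^ 3 = 1 := by
  apply Complex.ext <;> simp [zeta, pow_succ]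
  · linear_combination (3 / 8) * sqrt_three_sq
  · linear_combination (√3 / 8) * sqrt_three_sq

def χ₄ : AddChar (ZMod 4) ℂ := AddChar.zmodChar 4 Complex.I_pow_four
def σ₄ : AddChar (ZMod 4) ℂ := AddChar.zmodChar 4 (by norm_num : (-1 : ℂ) ^ 4 = 1)
def χ₃ : AddChar (ZMod 3) ℂ := AddChar.zmodChar 3 zeta_pow_three

/- The weights with `β² + γ² = 2/9` for which the constraint `kernel 1 2 ≥ 0` is tight; this
maximises the edge value `kernel 1 1`. -/
def β : ℝ := √((2 * √3 - 2) / 9)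
def γ : ℝ := √((4 - 2 * √3) / 9)

lemma β_sq : β ^ 2 = (2 * √3 - 2) / 9 := Real.sq_sqrt (by linarith [sqrt_three_bounds.1])
lemma γ_sq : γ ^ 2 = (4 - 2 * √3) / 9 := Real.sq_sqrt (by linarith [sqrt_three_bounds.2])

def vec (p : ZMod 4 × ZMod 3) : EuclideanSpace ℝ (Fin 5) :=
  toEuclidean5 (1 / 3) (β * (χ₄ p.1 * χ₃ p.2)) (γ * (σ₄ p.1 * χ₃ (-p.2)))

def kernel (d : ZMod 4) (e : ZMod 3) : ℝ :=
  1 / 9 + β ^ 2 * (χ₄ d * χ₃ e).re + γ ^ 2 * (σ₄ d * χ₃ (-e)).re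

end

lemma inner_vec (x y : ZMod 4) (a b : ZMod 3) :
    ⟪vec (x, a), vec (y, b)⟫_ℝ = kernel (y - x) (b - a) := by
  rw [vec, vec, kernel, inner_toEuclidean5, AddChar.re_conj_ofReal_mul_mul,
    AddChar.re_conj_ofReal_mul_mul, neg_sub_neg, neg_sub]
  ring

@[simp] lemma χ₄_one : χ₄ 1 = Complex.I := pow_one _
@[simp] lemma χ₄_two : χ₄ 2 = -1 := Complex.I_sq
@[simp] lemma χ₄_three : χ₄ 3 = -Complex.I := Complex.I_pow_three
@[simp] lemma σ₄_one : σ₄ 1 = -1 := pow_one _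
@[simp] lemma σ₄_two : σ₄ 2 = 1 := by change (-1 : ℂ) ^ 2 = 1; norm_num
@[simp] lemma σ₄_three : σ₄ 3 = -1 := by change (-1 : ℂ) ^ 3 = -1; norm_num
@[simp] lemma χ₃_one : χ₃ 1 = zeta := pow_one _
@[simp] lemma χ₃_two : χ₃ 2 = conj zeta := by
  change zeta ^ 2 = _
  apply Complex.ext <;> simp [zeta, pow_two]
  · linear_combination (-1 / 4) * sqrt_three_sq
  · ring
@[simp] lemma χ₃_neg_one : χ₃ (-1) = conj zeta := χ₃_two
@[simp] lemma χ₃_neg_two : χ₃ (-2) = zeta := χ₃_one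

lemma kernel_zero_left {e : ZMod 3} (he : e ≠ 0) : kernel 0 e = 0 := by
  obtain rfl | rfl : e = 1 ∨ e = 2 := by revert e; decide
  all_goals
    simp [kernel, zeta, β_sq, γ_sq]
    ring

lemma kernel_one_one : kernel 1 1 = (6 - 2 * √3) / 9 := by
  simp [kernel, zeta, β_sq, γ_sq]
  linear_combination (1 / 9) * sqrt_three_sq

lemma kernel_nonneg (d : ZMod 4) (e : ZMod 3) : 0 ≤ kernel d e := by
  obtain rfl | rfl | rfl | rfl : d = 0 ∨ d = 1 ∨ d = 2 ∨ d = 3 := by revert d; decide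
  all_goals
    obtain rfl | rfl | rfl : e = 0 ∨ e = 1 ∨ e = 2 := by revert e; decide
  all_goals
    simp [kernel, zeta, β_sq, γ_sq]
    nlinarith [sqrt_three_sq, sqrt_three_bounds]

lemma sum_χ₃ : ∑ a, χ₃ a = 0 :=
  AddChar.sum_eq_zero_of_ne_one <| (AddChar.zmod_char_ne_one_iff 3 χ₃).2 <| by
    simp [zeta, Complex.ext_iff]

lemma sum_χ₃_neg : ∑ a, χ₃ (-a) = 0 :=
  (Equiv.sum_comp (Equiv.neg (ZMod 3)) χ₃).trans sum_χ₃

lemma sum_vec (x : ZMod 4) : ∑ a, vec (x, a) = toEuclidean5 1 0 0 := by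
  simp only [vec, sum_toEuclidean5, ← Finset.mul_sum, sum_χ₃, sum_χ₃_neg]
  simp

end DirectedC4

open DirectedC4

/-- The synchronous vect-value of the directed 4-cycle game is at least `2(1 - 1/√3)`. -/
theorem stmt_16 :
    ∃ (η : EuclideanSpace ℝ (Fin 5)) (v : ZMod 4 × ZMod 3 → EuclideanSpace ℝ (Fin 5)),
      ‖η‖ = 1 ∧
      (∀ (x : ZMod 4) (a a' : ZMod 3), a ≠ a' → ⟪v (x, a), v (x, a')⟫_ℝ = 0) ∧
      (∀ x : ZMod 4, ∑ a : ZMod 3, v (x, a) = η) ∧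
      (∀ (x y : ZMod 4) (a b : ZMod 3), 0 ≤ ⟪v (x, a), v (y, b)⟫_ℝ) ∧
      (1 / 4 : ℝ) * ∑ x : ZMod 4, ∑ a : ZMod 3, ⟪v (x, a), v (x + 1, a + 1)⟫_ℝ =
        2 * (1 - 1 / Real.sqrt 3) := by
  refine ⟨toEuclidean5 1 0 0, vec, by simp [norm_toEuclidean5], fun x a a' h => ?_, sum_vec,
    fun x y a b => inner_vec x y a b ▸ kernel_nonneg _ _, ?_⟩
  · rw [inner_vec, sub_self, kernel_zero_left (sub_ne_zero.2 h.symm)]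
  · simp only [inner_vec, add_sub_cancel_left, kernel_one_one, Finset.sum_const,
      Finset.card_univ, ZMod.card, nsmul_eq_mul]
    field_simp
    linear_combination (-24) * sqrt_three_sq
end

section
/- Let S₃ denote the symmetric group on 3 letters (permutations of a 3-element set). Then the maximum over all functions w : S₃ → S₃ of the cardinality of the set {(x,y) ∈ S₃ × S₃ : w(x)·(w(y))⁻¹ = x·y·x⁻¹·y⁻¹} equals 24. In particular, the synchronous deterministic value of the commutator game on S₃ with uniform input density is 24/36 = 2/3, which is strictly larger than the value 1/2 of the constant strategy w ≡ identity (which counts the 18 commuting pairs). -/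
open Finset Equiv Equiv.Perm
open scoped commutatorElement

/-! Winning is symmetric, and on a triangle of winning pairs the commutators satisfy the cocycle
identity `⁅x, y⁆ * ⁅y, z⁆ = ⁅x, z⁆`. In `S₃` this identity holds on each coset of `A₃` and fails
on every triangle with two distinct vertices in one coset and the third in the other. So winning is
transitive on each coset, and the partners of `z` in the coset not containing `z` never win against
each other. For `y`, `z` in different cosets, the partners of `y` in its own coset therefore meet
the partners of `z` in at most one point. Pairing each `y` with `y * swap 0 1` bounds the number of
winning pairs by the number of pairs in a common coset plus `|S₃|`, that is `18 + 6`. The strategy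
`x ↦ x⁻¹` on `A₃`, `x ↦ 1` off it, attains the bound. -/

section TwoSidedRelation

variable {α : Type*} [Fintype α]

theorem card_filter_prod_eq_sum_card_filter (S : α → α → Prop) [DecidableRel S] :
    #{q : α × α | S q.1 q.2} = ∑ y, #{x | S x y} := by
  simp only [card_filter, Fintype.sum_prod_type_right]

variable [DecidableEq α] {R : α → α → Prop} [DecidableRel R] {p : α → Prop} [DecidablePred p]

theorem card_rel_sameSide_add_card_rel_otherSide_le (hsymm : ∀ x y, R x y → R y x)
    (htrans : ∀ x y z, (p x ↔ p y) → (p y ↔ p z) → R x y → R y z → R x z)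
    (hmixed : ∀ x y z, (p x ↔ p y) → ¬(p x ↔ p z) → R x z → R y z → R x y → x = y)
    {y z : α} (hyz : ¬(p y ↔ p z)) :
    #{x | (p x ↔ p y) ∧ R x y} + #{x | ¬(p x ↔ p z) ∧ R x z} ≤ #{x | p x ↔ p y} + 1 := by
  set side := ({x | p x ↔ p y} : Finset α)
  set cls := ({x | (p x ↔ p y) ∧ R x y} : Finset α)
  set nbrs := ({x | ¬(p x ↔ p z) ∧ R x z} : Finset α)
  have hunion : cls ∪ nbrs ⊆ side := by
    intro x hx
    simp only [cls, nbrs, side, mem_union, mem_filter, mem_univ, true_and] at hx ⊢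
    tauto
  have hinter : #(cls ∩ nbrs) ≤ 1 := by
    refine card_le_one.2 fun a ha b hb => ?_
    simp only [cls, nbrs, mem_inter, mem_filter, mem_univ, true_and] at ha hb
    exact hmixed a b z (by tauto) ha.2.1 ha.2.2 hb.2.2
      (htrans a y b ha.1.1 (by tauto) ha.1.2 (hsymm _ _ hb.1.2))
  calc #cls + #nbrs = #(cls ∪ nbrs) + #(cls ∩ nbrs) := (card_union_add_card_inter _ _).symm
    _ ≤ #side + 1 := add_le_add (card_le_card hunion) hinter

theorem card_rel_le_card_sameSide_add_card (hsymm : ∀ x y, R x y → R y x)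
    (htrans : ∀ x y z, (p x ↔ p y) → (p y ↔ p z) → R x y → R y z → R x z)
    (hmixed : ∀ x y z, (p x ↔ p y) → ¬(p x ↔ p z) → R x z → R y z → R x y → x = y)
    (σ : Perm α) (hσ : ∀ x, p (σ x) ↔ ¬p x) :
    #{q : α × α | R q.1 q.2} ≤ #{q : α × α | p q.1 ↔ p q.2} + Fintype.card α := by
  have hdeg (y : α) :
      #{x | R x y} = #{x | (p x ↔ p y) ∧ R x y} + #{x | ¬(p x ↔ p y) ∧ R x y} := by
    rw [← card_filter_add_card_filter_not (s := ({x | R x y} : Finset α)) (fun x => p x ↔ p y)]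
    simp only [filter_filter, and_comm]
  calc #{q : α × α | R q.1 q.2}
      = ∑ y, (#{x | (p x ↔ p y) ∧ R x y} + #{x | ¬(p x ↔ p y) ∧ R x y}) := by
        simp only [card_filter_prod_eq_sum_card_filter, hdeg]
    _ = ∑ y, (#{x | (p x ↔ p y) ∧ R x y} + #{x | ¬(p x ↔ p (σ y)) ∧ R x (σ y)}) := by
        rw [sum_add_distrib, sum_add_distrib,
          Equiv.sum_comp σ (fun z => #{x | ¬(p x ↔ p z) ∧ R x z})]
    _ ≤ ∑ y, (#{x | p x ↔ p y} + 1) := by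
        refine sum_le_sum fun y _ => ?_
        refine card_rel_sameSide_add_card_rel_otherSide_le hsymm htrans hmixed ?_
        rw [hσ]
        tauto
    _ = #{q : α × α | p q.1 ↔ p q.2} + Fintype.card α := by
        rw [sum_add_distrib, card_filter_prod_eq_sum_card_filter (fun a b => p a ↔ p b)]
        simp

end TwoSidedRelation

namespace CommutatorGame

variable {G : Type*} [Group G]

def Wins (w : G → G) (x y : G) : Prop := w x * (w y)⁻¹ = ⁅x, y⁆

instance [DecidableEq G] (w : G → G) : DecidableRel (Wins w) :=
  fun x y => inferInstanceAs (Decidable (w x * (w y)⁻¹ = ⁅x, y⁆))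

variable {w : G → G} {x y z : G}

theorem Wins.symm (h : Wins w x y) : Wins w y x := by
  rw [Wins, ← commutatorElement_inv, ← h, mul_inv_rev, inv_inv]

theorem Wins.trans_iff (hxy : Wins w x y) (hyz : Wins w y z) :
    Wins w x z ↔ ⁅x, y⁆ * ⁅y, z⁆ = ⁅x, z⁆ := by
  rw [Wins, ← hxy, ← hyz, mul_assoc, inv_mul_cancel_left]

end CommutatorGame

open CommutatorGame

set_option maxRecDepth 10000 in
theorem fin_three_commutator_mul_commutator_of_sign_iff :
    ∀ x y z : Perm (Fin 3), (sign x = 1 ↔ sign y = 1) → (sign y = 1 ↔ sign z = 1) →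
      ⁅x, y⁆ * ⁅y, z⁆ = ⁅x, z⁆ := by
  decide

set_option synthInstance.maxSize 1000 in
set_option maxRecDepth 10000 in
theorem fin_three_eq_of_commutator_mul_commutator :
    ∀ x y z : Perm (Fin 3), (sign x = 1 ↔ sign y = 1) → ¬(sign x = 1 ↔ sign z = 1) →
      ⁅x, z⁆ * ⁅z, y⁆ = ⁅x, y⁆ → x = y := by
  decide

theorem card_wins_fin_three_le (w : Perm (Fin 3) → Perm (Fin 3)) :
    #{q : Perm (Fin 3) × Perm (Fin 3) | Wins w q.1 q.2} ≤ 24 := by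
  have hbound := card_rel_le_card_sameSide_add_card (R := Wins w) (p := fun x => sign x = 1)
    (fun x y => Wins.symm)
    (fun x y z hxy hyz wxy wyz => (wxy.trans_iff wyz).2
      (fin_three_commutator_mul_commutator_of_sign_iff x y z hxy hyz))
    (fun x y z hxy hxz wxz wyz wxy => fin_three_eq_of_commutator_mul_commutator x y z hxy hxz
      ((wxz.trans_iff wyz.symm).1 wxy))
    (Equiv.mulRight (swap 0 1)) (by decide)
  have hsides : #{q : Perm (Fin 3) × Perm (Fin 3) | (sign q.1 = 1 ↔ sign q.2 = 1)} = 18 := by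
    decide
  rwa [hsides] at hbound

/-- For the commutator game on `S₃` with uniform input density, the optimal synchronous
deterministic strategy wins on `24` of the `36` input pairs (value `2/3`), strictly more
than the `18` commuting pairs counted by the constant identity strategy (value `1/2`). -/
theorem stmt_18 :
    IsGreatest {n : ℕ | ∃ w : Equiv.Perm (Fin 3) → Equiv.Perm (Fin 3),
        n = Set.ncard {p : Equiv.Perm (Fin 3) × Equiv.Perm (Fin 3) |
          w p.1 * (w p.2)⁻¹ = p.1 * p.2 * p.1⁻¹ * p.2⁻¹}} 24 ∧
      Set.ncard {p : Equiv.Perm (Fin 3) × Equiv.Perm (Fin 3) | p.1 * p.2 = p.2 * p.1} = 18 := by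
  have ncard_eq (P : Perm (Fin 3) × Perm (Fin 3) → Prop) [DecidablePred P] :
      {q | P q}.ncard = #{q | P q} := by
    rw [← coe_filter_univ, Set.ncard_coe_finset]
  refine ⟨⟨⟨fun x => if sign x = 1 then x⁻¹ else 1, ?_⟩, ?_⟩, ?_⟩
  · rw [ncard_eq]
    decide
  · rintro n ⟨w, rfl⟩
    rw [ncard_eq]
    exact card_wins_fin_three_le w
  · rw [ncard_eq]
    decide
end
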